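/- arXiv:math/0212166 — 4 statements merged into one kernel-verified Lean document; each statement's English description precedes it below -/
import Mathlib

section
/- Every Rosenthal basis {e_i} is subsymmetric, i.e., {e_i} is equivalent to every subsequence of itself. -/
open Finset

section Defs

variable {X Y : Type*} [NormedAddCommGroup X] [NormedSpace ℝ X]
  [NormedAddCommGroup Y] [NormedSpace ℝ Y]

/-- `e` is a (Schauder) basic sequence: all terms are nonzero and the
partial-sum projections are uniformly bounded. -/
def IsBasicSeq (e : ℕ → X) : Prop :=
  (∀ i, e i ≠ 0) ∧ ∃ K : ℝ, 1 ≤ K ∧ ∀ (a : ℕ → ℝ) (m n : ℕ), m ≤ n →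
    ‖∑ i ∈ Finset.range m, a i • e i‖ ≤ K * ‖∑ i ∈ Finset.range n, a i • e i‖

/-- `x` `C`-dominates `y` : `‖∑ aᵢ yᵢ‖ ≤ C • ‖∑ aᵢ xᵢ‖` for all finitely
supported scalar sequences. -/
def Dominates (C : ℝ) (x : ℕ → X) (y : ℕ → Y) : Prop :=
  ∀ (n : ℕ) (a : ℕ → ℝ),
    ‖∑ i ∈ Finset.range n, a i • y i‖ ≤ C * ‖∑ i ∈ Finset.range n, a i • x i‖

/-- `x` and `y` are `C`-equivalent basic sequences. -/
def SeqEquiv (C : ℝ) (x : ℕ → X) (y : ℕ → Y) : Prop :=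
  Dominates C x y ∧ Dominates C y x

/-- `x` and `y` are equivalent: `C`-equivalent for some `C ≥ 1`. -/
def EquivSeq (x : ℕ → X) (y : ℕ → Y) : Prop :=
  ∃ C : ℝ, 1 ≤ C ∧ SeqEquiv C x y

/-- `x` is a block sequence of `e`. -/
def IsBlockSeq (e x : ℕ → X) : Prop :=
  ∃ (A B : ℕ → ℕ) (c : ℕ → ℝ), (∀ n, A n < B n) ∧ (∀ n, B n ≤ A (n + 1)) ∧
    ∀ n, x n = ∑ i ∈ Finset.Ico (A n) (B n), c i • e i

/-- `x` is a normalized block basis of `e`. -/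
def IsNormalizedBlockSeq (e x : ℕ → X) : Prop :=
  IsBlockSeq e x ∧ ∀ n, ‖x n‖ = 1

/-- `x` is an identically distributed block sequence over `e`. -/
def IsIdentDistBlock (e x : ℕ → X) : Prop :=
  ∃ (k : ℕ) (r : ℕ → ℝ) (m : ℕ → ℕ), (∀ i, m i + k < m (i + 1)) ∧
    ∀ i, x i = ∑ j ∈ Finset.range (k + 1), r j • e (m i + j)

/-- Rosenthal's property: every normalized block basis has a subsequence
equivalent to `e`. -/
def HasRosenthalProperty (e : ℕ → X) : Prop :=
  ∀ x : ℕ → X, IsNormalizedBlockSeq e x →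
    ∃ f : ℕ → ℕ, StrictMono f ∧ EquivSeq (x ∘ f) e

/-- `e` is a Rosenthal basis of the space `X`. -/
def IsRosenthalBasis (e : ℕ → X) : Prop :=
  IsBasicSeq e ∧ (∀ i, ‖e i‖ = 1) ∧
    Dense (Submodule.span ℝ (Set.range e) : Set X) ∧
    HasRosenthalProperty e

/-- sup-norm of the first `n` coordinates (the `c₀`-norm). -/
noncomputable def supNorm (n : ℕ) (a : ℕ → ℝ) : ℝ :=
  ((Finset.range n).sup fun i => ‖a i‖₊ : NNReal)

/-- `ℓ_p`-norm of the first `n` coordinates. -/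
noncomputable def lpSumNorm (p : ℝ) (n : ℕ) (a : ℕ → ℝ) : ℝ :=
  (∑ i ∈ Finset.range n, |a i| ^ p) ^ (1 / p)

/-- `e` is equivalent to the unit vector basis of `c₀`. -/
def EquivToC0Basis (e : ℕ → X) : Prop :=
  ∃ C : ℝ, 1 ≤ C ∧ ∀ (n : ℕ) (a : ℕ → ℝ),
    supNorm n a ≤ C * ‖∑ i ∈ Finset.range n, a i • e i‖ ∧
    ‖∑ i ∈ Finset.range n, a i • e i‖ ≤ C * supNorm n a

/-- `e` is equivalent to the unit vector basis of `ℓ_p`. -/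
def EquivToLpBasis (p : ℝ) (e : ℕ → X) : Prop :=
  ∃ C : ℝ, 1 ≤ C ∧ ∀ (n : ℕ) (a : ℕ → ℝ),
    lpSumNorm p n a ≤ C * ‖∑ i ∈ Finset.range n, a i • e i‖ ∧
    ‖∑ i ∈ Finset.range n, a i • e i‖ ≤ C * lpSumNorm p n a

/-- `e` is invariant under spreading (1-equivalent to all its subsequences). -/
def InvariantUnderSpreading (e : ℕ → X) : Prop :=
  ∀ f : ℕ → ℕ, StrictMono f → ∀ (n : ℕ) (a : ℕ → ℝ),
    ‖∑ i ∈ Finset.range n, a i • e (f i)‖ = ‖∑ i ∈ Finset.range n, a i • e i‖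

/-- `e` is suppression unconditional. -/
def SuppressionUnconditional (e : ℕ → X) : Prop :=
  ∀ (s t : Finset ℕ), s ⊆ t → ∀ a : ℕ → ℝ,
    ‖∑ i ∈ s, a i • e i‖ ≤ ‖∑ i ∈ t, a i • e i‖

/-- `e` is 1-unconditional. -/
def OneUnconditional (e : ℕ → X) : Prop :=
  ∀ ε : ℕ → ℝ, (∀ i, ε i = 1 ∨ ε i = -1) → ∀ (n : ℕ) (a : ℕ → ℝ),
    ‖∑ i ∈ Finset.range n, (ε i * a i) • e i‖ = ‖∑ i ∈ Finset.range n, a i • e i‖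

/-- `x` is seminormalized. -/
def Seminormalized (x : ℕ → X) : Prop :=
  ∃ c C : ℝ, 0 < c ∧ c < C ∧ ∀ i, c < ‖x i‖ ∧ ‖x i‖ < C

/-- `x` generates the spreading model `xt`. -/
def GeneratesSpreadingModel (x : ℕ → X) (xt : ℕ → Y) : Prop :=
  ∀ (k : ℕ) (r : ℕ → ℝ) (ε : ℝ), 0 < ε → ∃ N : ℕ, ∀ l : ℕ → ℕ,
    StrictMono l → N < l 0 →
    |‖∑ i ∈ Finset.range (k + 1), r i • x (l i)‖ -
      ‖∑ i ∈ Finset.range (k + 1), r i • xt i‖| < ε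

/-- `x` generates a spreading model. -/
def GeneratesASpreadingModel (x : ℕ → X) : Prop :=
  ∀ (k : ℕ) (r : ℕ → ℝ), ∃ t : ℝ, ∀ ε : ℝ, 0 < ε → ∃ N : ℕ, ∀ l : ℕ → ℕ,
    StrictMono l → N < l 0 →
    |‖∑ i ∈ Finset.range (k + 1), r i • x (l i)‖ - t| < ε

/-- the spreading models generated by `x` and `y` are equivalent. -/
def SpreadingModelsEquiv (x y : ℕ → X) : Prop :=
  ∃ C : ℝ, 1 ≤ C ∧ ∀ k : ℕ, ∃ N : ℕ, ∀ l : ℕ → ℕ, StrictMono l → N < l 0 →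
    ∀ a : ℕ → ℝ,
      ‖∑ i ∈ Finset.range (k + 1), a i • y (l i)‖ ≤
          C * ‖∑ i ∈ Finset.range (k + 1), a i • x (l i)‖ ∧
      ‖∑ i ∈ Finset.range (k + 1), a i • x (l i)‖ ≤
          C * ‖∑ i ∈ Finset.range (k + 1), a i • y (l i)‖

/-- `x` is weakly null. -/
def WeaklyNull (x : ℕ → X) : Prop :=
  ∀ φ : StrongDual ℝ X, Filter.Tendsto (fun i => φ (x i)) Filter.atTop (nhds 0)

/-- `x` is subsymmetric: equivalent to all of its subsequences. -/
def Subsymmetric (x : ℕ → X) : Prop :=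
  ∀ f : ℕ → ℕ, StrictMono f → EquivSeq (x ∘ f) x

/-- concatenation of the first `m` terms of `a` with `x`. -/
def concatSeq (m : ℕ) (a x : ℕ → X) : ℕ → X :=
  fun i => if i < m then a i else x (i - m)

end Defs

/-!
Every subsequence of `e` is a normalized block basis, so by Rosenthal's property every infinite
`M ⊆ ℕ` contains an infinite `L` such that the subsequence of `e` indexed by `L` is
`C`-equivalent to `e` for some `C`; for fixed `C` this is a condition on the finite initial
segments of `L`. Nash-Williams' theorem (proved by Galvin–Prikry combinatorial forcing and
fusion) turns this into a uniform statement: there are a finite `s`, a constant `C` and an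
infinite `M` above `s` such that for every `L ⊆ M` the subsequence indexed by `s ∪ L` is
`C`-equivalent to `e`. Hence `e` is uniformly equivalent to all its subsequences that keep the
first `#s` terms, and an arbitrary subsequence differs from one of these in at most `#s` terms,
which costs a bounded factor because the coefficient functionals of a normalized basis are
bounded by twice the basis constant.
-/

namespace Ramsey

def IsInitSeg (w : Finset ℕ) (L : Set ℕ) : Prop :=
  ↑w ⊆ L ∧ ∀ x ∈ L, x ∉ w → ∀ y ∈ w, y < x

def above (N : Set ℕ) (s : Finset ℕ) : Set ℕ := {x ∈ N | ∀ y ∈ s, y < x}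

lemma above_subset (N : Set ℕ) (s : Finset ℕ) : above N s ⊆ N := fun _ hx => hx.1

lemma above_mono {N N' : Set ℕ} (h : N' ⊆ N) (s : Finset ℕ) : above N' s ⊆ above N s :=
  fun _ hx => ⟨h hx.1, hx.2⟩

@[simp] lemma above_empty (N : Set ℕ) : above N ∅ = N := by ext; simp [above]

lemma infinite_above {N : Set ℕ} (hN : N.Infinite) (s : Finset ℕ) : (above N s).Infinite :=
  (hN.sdiff (Set.finite_Iic (s.sup id))).mono fun _ hx =>
    ⟨hx.1, fun _ hy => (le_sup (f := id) hy).trans_lt (not_le.1 hx.2)⟩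

lemma isInitSeg_image_range {φ : ℕ → ℕ} (hφ : StrictMono φ) (n : ℕ) :
    IsInitSeg ((range n).image φ) (Set.range φ) := by
  refine ⟨by simp [Set.subset_def], ?_⟩
  rintro _ ⟨j, rfl⟩ hj _ hy
  obtain ⟨i, hi, rfl⟩ := mem_image.1 hy
  exact hφ ((mem_range.1 hi).trans_le
    (not_lt.1 fun hjn => hj (mem_image_of_mem φ (mem_range.2 hjn))))

lemma IsInitSeg.eq_image_range {φ : ℕ → ℕ} (hφ : StrictMono φ) {u : Finset ℕ}
    (hu : IsInitSeg u (Set.range φ)) : u = (range #u).image φ := by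
  classical
  have hex : ∃ j, φ j ∉ u := by
    by_contra! h
    exact (Set.infinite_range_of_injective hφ.injective).not_finite
      (u.finite_toSet.subset (by rintro _ ⟨j, rfl⟩; exact h j))
  have hu_eq : u = (range (Nat.find hex)).image φ := by
    ext y
    constructor
    · intro hy
      obtain ⟨i, rfl⟩ := hu.1 hy
      exact mem_image_of_mem φ (mem_range.2 (hφ.lt_iff_lt.1
        (hu.2 _ ⟨_, rfl⟩ (Nat.find_spec hex) _ hy)))
    · intro hy
      obtain ⟨i, hi, rfl⟩ := mem_image.1 hy
      exact not_not.1 (Nat.find_min hex (mem_range.1 hi))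
  rw [hu_eq, card_image_of_injective _ hφ.injective, card_range]

lemma exists_isInitSeg_card {L : Set ℕ} (hL : L.Infinite) (n : ℕ) :
    ∃ s, IsInitSeg s L ∧ #s = n := by
  have hφ : StrictMono (Nat.nth (· ∈ L)) := Nat.nth_strictMono hL
  refine ⟨(range n).image (Nat.nth (· ∈ L)), ?_,
    by rw [card_image_of_injective _ hφ.injective, card_range]⟩
  convert isInitSeg_image_range hφ n
  exact (Nat.range_nth_of_infinite hL).symm

lemma IsInitSeg.union {s w : Finset ℕ} {L : Set ℕ} (hs : IsInitSeg s L)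
    (hw : IsInitSeg w (above L s)) : IsInitSeg (s ∪ w) L := by
  refine ⟨by simpa using Set.union_subset hs.1 (hw.1.trans (above_subset L s)), ?_⟩
  intro x hx hxsw y hy
  have hxs : x ∉ s := fun h => hxsw (mem_union_left _ h)
  rcases mem_union.1 hy with hy | hy
  · exact hs.2 x hx hxs y hy
  · exact hw.2 x ⟨hx, fun z hz => hs.2 x hx hxs z hz⟩ (fun h => hxsw (mem_union_right _ h)) y hy

lemma exists_strictMono_enum {s : Finset ℕ} {M : Set ℕ} (hM : M.Infinite)
    (hMs : ∀ x ∈ M, ∀ y ∈ s, y < x) :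
    ∃ H : ℕ → ℕ, StrictMono H ∧ s = (range #s).image H ∧ ∀ j, #s ≤ j → H j ∈ M := by
  set A : Set ℕ := ↑s ∪ M
  have hA : A.Infinite := hM.mono Set.subset_union_right
  set H := Nat.nth (· ∈ A)
  have hH : StrictMono H := Nat.nth_strictMono hA
  have hrange : Set.range H = A := Nat.range_nth_of_infinite hA
  have hsH : s = (range #s).image H := IsInitSeg.eq_image_range hH <| by
    rw [hrange]
    exact ⟨Set.subset_union_left, fun x hx hxs y hy => hMs x (hx.resolve_left hxs) y hy⟩
  refine ⟨H, hH, hsH, fun j hj => (Nat.nth_mem_of_infinite hA j).resolve_left fun hjs => ?_⟩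
  obtain ⟨i, hi, hij⟩ := mem_image.1 (hsH ▸ hjs : H j ∈ (range #s).image H)
  exact not_lt.2 hj (hH.injective hij ▸ mem_range.1 hi)

section Fusion

variable (next : Finset ℕ → Set ℕ → Set ℕ) (M : Set ℕ)

/-- The first `k` points of the fusion sequence, and the reservoir for the later ones. -/
noncomputable def fusionStage : ℕ → Finset ℕ × Set ℕ
  | 0 => (∅, M)
  | k + 1 =>
    let N := next (fusionStage k).1 (fusionStage k).2
    (insert (sInf N) (fusionStage k).1, above N {sInf N})

noncomputable def fusionPool (k : ℕ) : Set ℕ :=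
  next (fusionStage next M k).1 (fusionStage next M k).2

noncomputable def fusionPoint (k : ℕ) : ℕ := sInf (fusionPool next M k)

lemma fusionStage_succ (k : ℕ) : fusionStage next M (k + 1) =
    (insert (fusionPoint next M k) (fusionStage next M k).1,
      above (fusionPool next M k) {fusionPoint next M k}) := rfl

lemma fusionStage_fst (k : ℕ) :
    (fusionStage next M k).1 = (range k).image (fusionPoint next M) := by
  induction k with
  | zero => rfl
  | succ k ih => rw [fusionStage_succ, ih, range_add_one, image_insert]

variable {next M}

lemma fusionStage_antitone (hsub : ∀ P N, next P N ⊆ N) :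
    Antitone fun k => (fusionStage next M k).2 :=
  antitone_nat_of_succ_le fun _ => (above_subset _ _).trans (hsub _ _)

lemma infinite_fusionStage (hinf : ∀ P N, N.Infinite → (next P N).Infinite) (hM : M.Infinite)
    (k : ℕ) : (fusionStage next M k).2.Infinite := by
  induction k with
  | zero => exact hM
  | succ k ih => exact infinite_above (hinf _ _ ih) _

lemma fusionPoint_mem (hinf : ∀ P N, N.Infinite → (next P N).Infinite) (hM : M.Infinite)
    (k : ℕ) : fusionPoint next M k ∈ fusionPool next M k :=
  Nat.sInf_mem (hinf _ _ (infinite_fusionStage hinf hM k)).nonempty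

variable (hsub : ∀ P N, next P N ⊆ N) (hinf : ∀ P N, N.Infinite → (next P N).Infinite)
  (hM : M.Infinite)
include hsub hinf hM

lemma fusionPoint_mem_stage {k j : ℕ} (hkj : k ≤ j) :
    fusionPoint next M j ∈ (fusionStage next M k).2 :=
  fusionStage_antitone hsub hkj (hsub _ _ (fusionPoint_mem hinf hM j))

lemma strictMono_fusionPoint : StrictMono (fusionPoint next M) :=
  fun _ _ hkj => (fusionPoint_mem_stage hsub hinf hM hkj).2 _ (mem_singleton_self _)

lemma fusionPoint_mem_pool {k j : ℕ} (hkj : k ≤ j) :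
    fusionPoint next M j ∈ fusionPool next M k := by
  rcases hkj.eq_or_lt with rfl | hkj
  · exact fusionPoint_mem hinf hM k
  · exact (fusionPoint_mem_stage hsub hinf hM hkj).1

end Fusion

section Dense

variable {R : Finset ℕ → Set ℕ → Prop} (hmono : ∀ s {N N'}, N' ⊆ N → R s N → R s N')
  (hdense : ∀ s N, N.Infinite → ∃ N' ⊆ N, N'.Infinite ∧ R s N')
include hmono hdense

lemma exists_forall_mem_of_dense (S : Finset (Finset ℕ)) {N : Set ℕ} (hN : N.Infinite) :
    ∃ N' ⊆ N, N'.Infinite ∧ ∀ s ∈ S, R s N' := by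
  induction S using Finset.induction_on generalizing N with
  | empty => exact ⟨N, subset_rfl, hN, by simp⟩
  | insert s S _ ih =>
    obtain ⟨N₁, hN₁N, hN₁, hS⟩ := ih hN
    obtain ⟨N₂, hN₂N₁, hN₂, hs⟩ := hdense s N₁ hN₁
    exact ⟨N₂, hN₂N₁.trans hN₁N, hN₂, by
      simpa [hs] using fun s' hs' => hmono s' hN₂N₁ (hS s' hs')⟩

theorem exists_fusion {M : Set ℕ} (hM : M.Infinite) :
    ∃ M' ⊆ M, M'.Infinite ∧ ∀ s : Finset ℕ, ↑s ⊆ M' → R s (above M' s) := by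
  have hstep : ∀ (P : Finset ℕ) (N : Set ℕ), ∃ N' ⊆ N,
      N.Infinite → N'.Infinite ∧ ∀ s ∈ P.powerset, R s N' := by
    intro P N
    by_cases hN : N.Infinite
    · obtain ⟨N', h⟩ := exists_forall_mem_of_dense hmono hdense P.powerset hN
      exact ⟨N', h.1, fun _ => h.2⟩
    · exact ⟨N, subset_rfl, fun h => absurd h hN⟩
  choose next hsub hnext using hstep
  have hinf : ∀ P N, N.Infinite → (next P N).Infinite := fun P N hN => (hnext P N hN).1
  set m := fusionPoint next M
  have hm := strictMono_fusionPoint hsub hinf hM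
  refine ⟨Set.range m, ?_, Set.infinite_range_of_injective hm.injective, ?_⟩
  · rintro _ ⟨k, rfl⟩
    exact fusionPoint_mem_stage hsub hinf hM (Nat.zero_le k)
  intro s hs
  classical
  have hex : ∃ k, ∀ y ∈ s, y < m k :=
    ⟨s.sup id + 1, fun y hy => (Nat.lt_succ_of_le (le_sup (f := id) hy)).trans_le hm.le_apply⟩
  set k := Nat.find hex
  have hsk : s ∈ (fusionStage next M k).1.powerset := by
    rw [mem_powerset, fusionStage_fst]
    intro y hy
    obtain ⟨i, rfl⟩ := hs hy
    exact mem_image_of_mem m (mem_range.2 (hm.lt_iff_lt.1 (Nat.find_spec hex _ hy)))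
  refine hmono s ?_ ((hnext _ _ (infinite_fusionStage hinf hM k)).2 s hsk)
  rintro _ ⟨⟨j, rfl⟩, hj⟩
  exact fusionPoint_mem_pool hsub hinf hM (not_lt.1 fun hjk => Nat.find_min hex hjk hj)

end Dense

section NashWilliams

variable (F : Finset ℕ → Prop)

def Accepts (s : Finset ℕ) (N : Set ℕ) : Prop :=
  ∀ L ⊆ above N s, L.Infinite → ∃ w, IsInitSeg w (↑s ∪ L) ∧ F w

def Rejects (s : Finset ℕ) (N : Set ℕ) : Prop :=
  ∀ N' ⊆ N, N'.Infinite → ¬ Accepts F s N'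

variable {F}

lemma Accepts.mono {s : Finset ℕ} {N N' : Set ℕ} (h : N' ⊆ N) (hacc : Accepts F s N) :
    Accepts F s N' :=
  fun L hL => hacc L (hL.trans (above_mono h s))

lemma Rejects.mono {s : Finset ℕ} {N N' : Set ℕ} (h : N' ⊆ N) (hrej : Rejects F s N) :
    Rejects F s N' :=
  fun N'' hN'' => hrej N'' (hN''.trans h)

lemma accepts_of_mem {s : Finset ℕ} (hs : F s) (N : Set ℕ) : Accepts F s N :=
  fun _ hL _ => ⟨s, ⟨Set.subset_union_left, fun _ hx hxs _ hy =>
    (hL (hx.resolve_left hxs)).2 _ hy⟩, hs⟩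

lemma finite_setOf_not_rejects_insert {M : Set ℕ}
    (hdec : ∀ s : Finset ℕ, ↑s ⊆ M → Accepts F s (above M s) ∨ Rejects F s (above M s))
    {s : Finset ℕ} (hs : ↑s ⊆ M) (hrej : Rejects F s (above M s)) :
    {x ∈ above M s | ¬ Rejects F (insert x s) (above M (insert x s))}.Finite := by
  -- Otherwise these `x` would form a set accepting `s`: an infinite `L` among them is
  -- `insert (sInf L) L'` with `L'` above `insert (sInf L) s`, which is accepted.
  by_contra hinf
  refine hrej _ (fun _ hx => hx.1) hinf fun L hL hLinf => ?_
  set x := sInf L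
  have hxL : x ∈ L := Nat.sInf_mem hLinf.nonempty
  have hx := (hL hxL).1
  have hacc : Accepts F (insert x s) (above M (insert x s)) :=
    (hdec _ (by simpa using Set.insert_subset hx.1.1 hs)).resolve_right hx.2
  have hsub : above L {x} ⊆ above (above M (insert x s)) (insert x s) := by
    rintro y ⟨hyL, hyx⟩
    have hy := hL hyL
    have hys : ∀ z ∈ insert x s, z < y := by
      simpa [hyx x (mem_singleton_self x)] using hy.2
    exact ⟨⟨hy.1.1.1, hys⟩, hys⟩
  obtain ⟨w, hw, hFw⟩ := hacc _ hsub (infinite_above hLinf _)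
  refine ⟨w, ?_, hFw⟩
  convert hw using 1
  ext y
  simp only [Set.mem_union, mem_coe, mem_insert, above, mem_singleton, Set.mem_ofPred_eq,
    forall_eq]
  constructor
  · rintro (hy | hy)
    · exact Or.inl (Or.inr hy)
    · rcases (Nat.sInf_le hy).eq_or_lt with h | h
      · exact Or.inl (Or.inl h.symm)
      · exact Or.inr ⟨hy, h⟩
  · rintro ((rfl | hy) | hy)
    exacts [Or.inr hxL, Or.inl hy, Or.inr hy.1]

lemma exists_accepts_or_rejects (s : Finset ℕ) {N : Set ℕ} (hN : N.Infinite) :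
    ∃ N' ⊆ N, N'.Infinite ∧ (Accepts F s N' ∨ Rejects F s N') := by
  by_cases h : ∃ N' ⊆ N, N'.Infinite ∧ Accepts F s N'
  · obtain ⟨N', hN'N, hN', hacc⟩ := h
    exact ⟨N', hN'N, hN', Or.inl hacc⟩
  · exact ⟨N, subset_rfl, hN, Or.inr fun N' hN'N hN' hacc => h ⟨N', hN'N, hN', hacc⟩⟩

lemma exists_forall_rejects {M : Set ℕ} (hM : M.Infinite)
    (hdec : ∀ s : Finset ℕ, ↑s ⊆ M → Accepts F s (above M s) ∨ Rejects F s (above M s))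
    (hrej₀ : Rejects F ∅ M) :
    ∃ M' ⊆ M, M'.Infinite ∧ ∀ v : Finset ℕ, ↑v ⊆ M' → Rejects F v (above M v) := by
  obtain ⟨M', hM'M, hM', hext⟩ :=
    exists_fusion (R := fun s N => ↑s ⊆ M → Rejects F s (above M s) →
        ∀ x ∈ N, x ∈ above M s → Rejects F (insert x s) (above M (insert x s)))
      (fun _ _ _ h hR hs hrej x hx => hR hs hrej x (h hx))
      (fun s N hN => by
        by_cases h : ↑s ⊆ M ∧ Rejects F s (above M s)
        · refine ⟨N \ {x ∈ above M s | ¬ Rejects F (insert x s) (above M (insert x s))},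
            Set.sdiff_subset, hN.sdiff (finite_setOf_not_rejects_insert hdec h.1 h.2),
            fun _ _ x hx hxM => ?_⟩
          by_contra hx'
          exact hx.2 ⟨hxM, hx'⟩
        · exact ⟨N, subset_rfl, hN, fun hs hrej => absurd ⟨hs, hrej⟩ h⟩)
      hM
  refine ⟨M', hM'M, hM', fun v => ?_⟩
  induction v using Finset.induction_on_max with
  | empty => simpa using hrej₀
  | insert x s hxs ih =>
    intro hv
    have hs : ↑s ⊆ M' := fun y hy => hv (by simp [mem_coe.1 hy])
    have hx : x ∈ M' := hv (by simp)
    exact hext s hs (hs.trans hM'M) (ih hs) x ⟨hx, hxs⟩ ⟨hM'M hx, hxs⟩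

theorem nashWilliams (F : Finset ℕ → Prop) {M : Set ℕ} (hM : M.Infinite) :
    ∃ M' ⊆ M, M'.Infinite ∧
      ((∀ L ⊆ M', L.Infinite → ∃ w, IsInitSeg w L ∧ F w) ∨ ∀ v : Finset ℕ, ↑v ⊆ M' → ¬ F v) := by
  obtain ⟨M₁, hM₁M, hM₁, hdec⟩ :=
    exists_fusion (R := fun s N => Accepts F s N ∨ Rejects F s N)
      (fun _ _ _ h => Or.imp (Accepts.mono h) (Rejects.mono h))
      (fun s _ => exists_accepts_or_rejects s) hM
  rcases hdec ∅ (by simp) with hacc | hrej₀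
  · refine ⟨M₁, hM₁M, hM₁, Or.inl fun L hL hLinf => ?_⟩
    simpa using hacc L (by simpa using hL) hLinf
  obtain ⟨M₂, hM₂M₁, hM₂, hrej⟩ := exists_forall_rejects hM₁ hdec (by simpa using hrej₀)
  exact ⟨M₂, hM₂M₁.trans hM₁M, hM₂, Or.inr fun v hv hFv =>
    hrej v hv _ subset_rfl (infinite_above hM₁ v) (accepts_of_mem hFv _)⟩

end NashWilliams

theorem exists_uniform_cone (T : ℕ → Finset ℕ → Prop)
    (hT : ∀ M : Set ℕ, M.Infinite → ∃ C, ∃ L ⊆ M, L.Infinite ∧ ∀ u, IsInitSeg u L → T C u) :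
    ∃ (C : ℕ) (s : Finset ℕ) (M : Set ℕ), M.Infinite ∧ (∀ x ∈ M, ∀ y ∈ s, y < x) ∧
      ∀ v : Finset ℕ, ↑v ⊆ M → T C (s ∪ v) := by
  by_contra hcone
  -- Tying the constant to `#s` lets a single fusion handle all constants at once.
  obtain ⟨M, -, hM, hbad⟩ := exists_fusion (M := Set.univ)
    (R := fun s N => ∀ L ⊆ N, L.Infinite → ∃ w, IsInitSeg w L ∧ ¬ T #s (s ∪ w))
    (fun _ _ _ h hR L hL => hR L (hL.trans h))
    (fun s N hN => by
      obtain ⟨N', hN'N, hN', hdich⟩ := nashWilliams (fun w => ¬ T #s (s ∪ w)) hN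
      refine ⟨N', hN'N, hN', hdich.resolve_right fun hgood => hcone ?_⟩
      exact ⟨#s, s, above N' s, infinite_above hN' s, fun x hx => hx.2,
        fun v hv => not_not.1 (hgood v (hv.trans (above_subset _ _)))⟩)
    Set.infinite_univ
  obtain ⟨C, L, hLM, hL, hLgood⟩ := hT M hM
  obtain ⟨s, hs, rfl⟩ := exists_isInitSeg_card hL C
  obtain ⟨w, hw, hTw⟩ :=
    hbad s (hs.1.trans hLM) (above L s) (above_mono hLM s) (infinite_above hL s)
  exact hTw (hLgood _ (hs.union hw))

end Ramsey

section SequenceEquivalence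

variable {X Y Z : Type*} [NormedAddCommGroup X] [NormedSpace ℝ X] [NormedAddCommGroup Y]
  [NormedSpace ℝ Y] [NormedAddCommGroup Z] [NormedSpace ℝ Z]
  {C D : ℝ} {x : ℕ → X} {y : ℕ → Y} {z : ℕ → Z}

lemma sum_range_extend_smul {E : Type*} [AddCommMonoid E] [Module ℝ E] {k : ℕ → ℕ}
    (hk : StrictMono k) (a : ℕ → ℝ) (u : ℕ → E) (n : ℕ) :
    ∑ j ∈ range (k n), Function.extend k a 0 j • u j = ∑ i ∈ range n, a i • u (k i) := by
  classical
  rw [← sum_subset (s₁ := (range n).image k), sum_image hk.injective.injOn]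
  · exact sum_congr rfl fun i _ => by rw [hk.injective.extend_apply]
  · intro j hj
    obtain ⟨i, hi, rfl⟩ := mem_image.1 hj
    exact mem_range.2 (hk (mem_range.1 hi))
  · intro j hj hjk
    rw [Function.extend_apply', Pi.zero_apply, zero_smul]
    rintro ⟨i, rfl⟩
    exact hjk (mem_image_of_mem k (mem_range.2 (hk.lt_iff_lt.1 (mem_range.1 hj))))

lemma Dominates.mono (h : Dominates C x y) (hCD : C ≤ D) : Dominates D x y :=
  fun n a => (h n a).trans (mul_le_mul_of_nonneg_right hCD (norm_nonneg _))

lemma Dominates.trans (hxy : Dominates C x y) (hyz : Dominates D y z) (hD : 0 ≤ D) :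
    Dominates (D * C) x z :=
  fun n a => (hyz n a).trans (by rw [mul_assoc]; exact mul_le_mul_of_nonneg_left (hxy n a) hD)

lemma Dominates.comp (h : Dominates C x y) {k : ℕ → ℕ} (hk : StrictMono k) :
    Dominates C (x ∘ k) (y ∘ k) := fun n a => by
  simpa only [Function.comp_apply, sum_range_extend_smul hk] using h (k n) (Function.extend k a 0)

lemma SeqEquiv.mono (h : SeqEquiv C x y) (hCD : C ≤ D) : SeqEquiv D x y :=
  ⟨h.1.mono hCD, h.2.mono hCD⟩

lemma SeqEquiv.symm (h : SeqEquiv C x y) : SeqEquiv C y x := ⟨h.2, h.1⟩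

lemma SeqEquiv.trans (hxy : SeqEquiv C x y) (hyz : SeqEquiv D y z) (hC : 0 ≤ C) (hD : 0 ≤ D) :
    SeqEquiv (D * C) x z :=
  ⟨hxy.1.trans hyz.1 hD, mul_comm C D ▸ hyz.2.trans hxy.2 hC⟩

lemma SeqEquiv.comp (h : SeqEquiv C x y) {k : ℕ → ℕ} (hk : StrictMono k) :
    SeqEquiv C (x ∘ k) (y ∘ k) :=
  ⟨h.1.comp hk, h.2.comp hk⟩

lemma SeqEquiv.equivSeq (h : SeqEquiv C x y) : EquivSeq x y :=
  ⟨max 1 C, le_max_left _ _, h.mono (le_max_right _ _)⟩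

def SeqEquivUpTo (C : ℝ) (n : ℕ) (x : ℕ → X) (y : ℕ → Y) : Prop :=
  ∀ a : ℕ → ℝ, ‖∑ i ∈ range n, a i • y i‖ ≤ C * ‖∑ i ∈ range n, a i • x i‖ ∧
    ‖∑ i ∈ range n, a i • x i‖ ≤ C * ‖∑ i ∈ range n, a i • y i‖

lemma seqEquiv_iff_forall_seqEquivUpTo : SeqEquiv C x y ↔ ∀ n, SeqEquivUpTo C n x y :=
  ⟨fun h n a => ⟨h.1 n a, h.2 n a⟩, fun h => ⟨fun n a => (h n a).1, fun n a => (h n a).2⟩⟩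

lemma sum_range_ite_lt_smul {E : Type*} [AddCommMonoid E] [Module ℝ E] {m n : ℕ} (hmn : m ≤ n)
    (a : ℕ → ℝ) (u : ℕ → E) :
    ∑ i ∈ range n, (if i < m then a i else 0) • u i = ∑ i ∈ range m, a i • u i := by
  rw [← sum_range_add_sum_Ico _ hmn, sum_eq_zero (s := Ico m n), add_zero]
  · exact sum_congr rfl fun i hi => by rw [if_pos (mem_range.1 hi)]
  · intro i hi
    rw [if_neg (not_lt.2 (mem_Ico.1 hi).1), zero_smul]

lemma SeqEquivUpTo.mono {m n : ℕ} (h : SeqEquivUpTo C n x y) (hmn : m ≤ n) (hCD : C ≤ D) :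
    SeqEquivUpTo D m x y := by
  intro a
  have := h fun i => if i < m then a i else 0
  rw [sum_range_ite_lt_smul hmn, sum_range_ite_lt_smul hmn] at this
  exact ⟨this.1.trans (mul_le_mul_of_nonneg_right hCD (norm_nonneg _)),
    this.2.trans (mul_le_mul_of_nonneg_right hCD (norm_nonneg _))⟩

lemma SeqEquivUpTo.congr {n : ℕ} {x' : ℕ → X} (h : SeqEquivUpTo C n x y)
    (hxx' : ∀ i < n, x i = x' i) : SeqEquivUpTo C n x' y := by
  intro a
  have hsum : ∑ i ∈ range n, a i • x' i = ∑ i ∈ range n, a i • x i :=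
    sum_congr rfl fun i hi => by rw [hxx' i (mem_range.1 hi)]
  rw [hsum]
  exact h a

def HasBasisConstant (K : ℝ) (x : ℕ → X) : Prop :=
  ∀ (a : ℕ → ℝ) (m n : ℕ), m ≤ n →
    ‖∑ i ∈ range m, a i • x i‖ ≤ K * ‖∑ i ∈ range n, a i • x i‖

lemma HasBasisConstant.comp {K : ℝ} (hx : HasBasisConstant K x) {k : ℕ → ℕ}
    (hk : StrictMono k) : HasBasisConstant K (x ∘ k) := fun a m n hmn => by
  simpa only [Function.comp_apply, sum_range_extend_smul hk] using
    hx (Function.extend k a 0) (k m) (k n) (hk.monotone hmn)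

lemma HasBasisConstant.abs_coeff_le {K : ℝ} (hx : HasBasisConstant K x) (hnorm : ∀ i, ‖x i‖ = 1)
    (a : ℕ → ℝ) {m n : ℕ} (hmn : m < n) :
    |a m| ≤ 2 * K * ‖∑ i ∈ range n, a i • x i‖ := by
  have hcoeff : a m • x m = ∑ i ∈ range (m + 1), a i • x i - ∑ i ∈ range m, a i • x i := by
    rw [sum_range_succ, add_sub_cancel_left]
  calc |a m| = ‖a m • x m‖ := by rw [norm_smul, hnorm, mul_one, Real.norm_eq_abs]
    _ ≤ ‖∑ i ∈ range (m + 1), a i • x i‖ + ‖∑ i ∈ range m, a i • x i‖ :=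
        hcoeff ▸ norm_sub_le _ _
    _ ≤ K * ‖∑ i ∈ range n, a i • x i‖ + K * ‖∑ i ∈ range n, a i • x i‖ :=
        add_le_add (hx a _ _ hmn) (hx a _ _ hmn.le)
    _ = 2 * K * ‖∑ i ∈ range n, a i • x i‖ := by ring

lemma HasBasisConstant.dominates_comp_of_eq_from {K : ℝ} (hx : HasBasisConstant K x) (hK : 0 ≤ K)
    (hnorm : ∀ i, ‖x i‖ = 1) {h h' : ℕ → ℕ} (hh : StrictMono h) {t : ℕ}
    (hhh' : ∀ i, t ≤ i → h i = h' i) : Dominates (1 + 4 * K * t) (x ∘ h) (x ∘ h') := by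
  intro n a
  set S := ∑ i ∈ range n, a i • (x ∘ h) i
  have hdiff : ∑ i ∈ range n, a i • (x ∘ h') i - S =
      ∑ i ∈ (range n).filter (· < t), a i • (x (h' i) - x (h i)) := by
    rw [sum_filter, ← sum_sub_distrib]
    refine sum_congr rfl fun i _ => ?_
    split_ifs with hi
    · rw [Function.comp_apply, Function.comp_apply, smul_sub]
    · rw [Function.comp_apply, Function.comp_apply, hhh' i (not_lt.1 hi), sub_self]
  have hterm : ∀ i ∈ (range n).filter (· < t), ‖a i • (x (h' i) - x (h i))‖ ≤ 4 * K * ‖S‖ := by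
    intro i hi
    have hai := (hx.comp hh).abs_coeff_le (fun j => hnorm (h j)) a (mem_range.1 (mem_filter.1 hi).1)
    calc ‖a i • (x (h' i) - x (h i))‖ ≤ |a i| * 2 := by
          rw [norm_smul, Real.norm_eq_abs]
          exact mul_le_mul_of_nonneg_left
            ((norm_sub_le _ _).trans (by rw [hnorm, hnorm]; norm_num)) (abs_nonneg _)
      _ ≤ 4 * K * ‖S‖ := by linarith
  have hcard : #((range n).filter (· < t)) ≤ t :=
    (card_le_card fun i hi => mem_range.2 (mem_filter.1 hi).2).trans (card_range t).le
  have hbound : ‖∑ i ∈ range n, a i • (x ∘ h') i - S‖ ≤ 4 * K * t * ‖S‖ := by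
    rw [hdiff]
    calc _ ≤ ∑ i ∈ (range n).filter (· < t), 4 * K * ‖S‖ := norm_sum_le_of_le _ hterm
      _ = #((range n).filter (· < t)) * (4 * K * ‖S‖) := by rw [sum_const, nsmul_eq_mul]
      _ ≤ t * (4 * K * ‖S‖) := mul_le_mul_of_nonneg_right (by exact_mod_cast hcard) (by positivity)
      _ = 4 * K * t * ‖S‖ := by ring
  calc ‖∑ i ∈ range n, a i • (x ∘ h') i‖ ≤ ‖S‖ + ‖∑ i ∈ range n, a i • (x ∘ h') i - S‖ :=
        norm_le_insert' _ _
    _ ≤ (1 + 4 * K * t) * ‖S‖ := by linarith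

end SequenceEquivalence

lemma StrictMono.eq_of_image_range_eq {φ ψ : ℕ → ℕ} (hφ : StrictMono φ) (hψ : StrictMono ψ)
    {n : ℕ} (h : (range n).image φ = (range n).image ψ) : ∀ i < n, φ i = ψ i := by
  have hs : #((range n).image φ) = n := by rw [card_image_of_injective _ hφ.injective, card_range]
  have hφs := orderEmbOfFin_unique hs (f := fun j : Fin n => φ j)
    (fun j => mem_image_of_mem φ (mem_range.2 j.2)) fun _ _ hjk => hφ hjk
  have hψs := orderEmbOfFin_unique hs (f := fun j : Fin n => ψ j)
    (fun j => h ▸ mem_image_of_mem ψ (mem_range.2 j.2)) fun _ _ hjk => hψ hjk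
  exact fun i hi => congrFun (hφs.trans hψs.symm) ⟨i, hi⟩

section Rosenthal

variable {X : Type*} [NormedAddCommGroup X] [NormedSpace ℝ X] {e : ℕ → X}

def EnumSeqEquiv (C : ℝ) (e : ℕ → X) (u : Finset ℕ) : Prop :=
  ∀ ψ : ℕ → ℕ, StrictMono ψ → (range #u).image ψ = u → SeqEquivUpTo C #u (e ∘ ψ) e

lemma isNormalizedBlockSeq_comp (hnorm : ∀ i, ‖e i‖ = 1) {N : ℕ → ℕ} (hN : StrictMono N) :
    IsNormalizedBlockSeq e (e ∘ N) :=
  ⟨⟨N, fun n => N n + 1, fun _ => 1, fun _ => lt_add_one _, fun n => hN (lt_add_one n),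
    fun n => by simp⟩, fun n => hnorm (N n)⟩

lemma HasRosenthalProperty.exists_enumSeqEquiv (hros : HasRosenthalProperty e)
    (hnorm : ∀ i, ‖e i‖ = 1) {M : Set ℕ} (hM : M.Infinite) :
    ∃ C : ℕ, ∃ L ⊆ M, L.Infinite ∧ ∀ u, Ramsey.IsInitSeg u L → EnumSeqEquiv C e u := by
  have hN : StrictMono (Nat.nth (· ∈ M)) := Nat.nth_strictMono hM
  obtain ⟨g, hg, Cr, -, hequiv⟩ := hros _ (isNormalizedBlockSeq_comp hnorm hN)
  have hNg := hN.comp hg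
  refine ⟨⌈Cr⌉₊, Set.range (Nat.nth (· ∈ M) ∘ g), ?_,
    Set.infinite_range_of_injective hNg.injective, fun u hu ψ hψ hψu => ?_⟩
  · rintro _ ⟨i, rfl⟩
    exact Nat.nth_mem_of_infinite hM _
  have hagree := hNg.eq_of_image_range_eq hψ ((hu.eq_image_range hNg).symm.trans hψu.symm)
  exact ((seqEquiv_iff_forall_seqEquivUpTo.1 hequiv #u).congr fun i hi =>
    congrArg e (hagree i hi)).mono le_rfl (Nat.le_ceil Cr)

theorem HasRosenthalProperty.exists_uniform_seqEquiv (hros : HasRosenthalProperty e)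
    (hnorm : ∀ i, ‖e i‖ = 1) : ∃ (t : ℕ) (C : ℝ), 0 ≤ C ∧
      ∀ κ : ℕ → ℕ, StrictMono κ → (∀ i < t, κ i = i) → SeqEquiv C (e ∘ κ) e := by
  obtain ⟨C, s, M, hM, hMs, hcone⟩ := Ramsey.exists_uniform_cone
    (fun C u => EnumSeqEquiv (C : ℝ) e u) fun M hM => hros.exists_enumSeqEquiv hnorm hM
  obtain ⟨H, hH, hsH, hHM⟩ := Ramsey.exists_strictMono_enum hM hMs
  have hstable : ∀ κ : ℕ → ℕ, StrictMono κ → (∀ i < #s, κ i = i) →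
      SeqEquiv C (e ∘ H ∘ κ) e := by
    intro κ hκ hκs
    refine seqEquiv_iff_forall_seqEquivUpTo.2 fun n =>
      SeqEquivUpTo.mono (n := max n #s) ?_ (le_max_left _ _) le_rfl
    set v := (Ico #s (max n #s)).image (H ∘ κ)
    have hv : ↑v ⊆ M := by
      intro y hy
      obtain ⟨i, hi, rfl⟩ := mem_image.1 hy
      exact hHM _ ((mem_Ico.1 hi).1.trans hκ.le_apply)
    have hsv : (range (max n #s)).image (H ∘ κ) = s ∪ v := by
      rw [range_eq_Ico, ← Ico_union_Ico_eq_Ico (Nat.zero_le _) (le_max_right n #s), image_union,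
        ← range_eq_Ico, hsH, card_image_of_injective _ hH.injective, card_range]
      congr 1
      exact image_congr fun i hi => by simp [hκs i (mem_range.1 hi)]
    have hcard : #(s ∪ v) = max n #s := by
      rw [← hsv, card_image_of_injective _ (hH.comp hκ).injective, card_range]
    have := hcone v hv (H ∘ κ) (hH.comp hκ) (by rw [hcard, hsv])
    rwa [hcard] at this
  have hH_equiv : SeqEquiv C (e ∘ H) e := hstable id strictMono_id fun _ _ => rfl
  -- `e ∘ κ` is `C`-equivalent to `e ∘ H ∘ κ` by transporting `hH_equiv` along `κ`.
  exact ⟨#s, C * C, by positivity, fun κ hκ hκs =>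
    (hH_equiv.comp hκ).symm.trans (hstable κ hκ hκs) (Nat.cast_nonneg C) (Nat.cast_nonneg C)⟩

end Rosenthal

theorem statement2_general {X : Type*} [NormedAddCommGroup X] [NormedSpace ℝ X]
    (e : ℕ → X) (he : IsRosenthalBasis e) :
    ∀ f : ℕ → ℕ, StrictMono f → EquivSeq (e ∘ f) e := by
  obtain ⟨⟨-, K, hK, hbasis⟩, hnorm, -, hros⟩ := he
  obtain ⟨t, C, hC, hstable⟩ := hros.exists_uniform_seqEquiv hnorm
  intro f hf
  set f' : ℕ → ℕ := fun i => if i < t then i else f i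
  have hf' : StrictMono f' := by
    intro i j hij
    simp only [f']
    split_ifs with hi hj hj
    · exact hij
    · exact hij.trans_le hf.le_apply
    · omega
    · exact hf hij
  have hagree : ∀ i, t ≤ i → f i = f' i := fun i hi => (if_neg (not_lt.2 hi)).symm
  have hK₀ : (0 : ℝ) ≤ K := zero_le_one.trans hK
  have hchange : SeqEquiv (1 + 4 * K * t) (e ∘ f) (e ∘ f') :=
    ⟨HasBasisConstant.dominates_comp_of_eq_from hbasis hK₀ hnorm hf hagree,
      HasBasisConstant.dominates_comp_of_eq_from hbasis hK₀ hnorm hf' fun i hi =>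
        (hagree i hi).symm⟩
  exact (hchange.trans (hstable f' hf' fun i hi => if_pos hi) (by positivity) hC).equivSeq

/-- Every Rosenthal basis is subsymmetric, i.e. equivalent to every
subsequence of itself. -/
theorem statement2 {X : Type*} [NormedAddCommGroup X] [NormedSpace ℝ X] [CompleteSpace X]
    (e : ℕ → X) (he : IsRosenthalBasis e) :
    ∀ f : ℕ → ℕ, StrictMono f → EquivSeq (e ∘ f) e :=
  statement2_general e he
end

section
/- Let {t_i} be a normalized basic sequence invariant under spreading in a Banach space. Then the difference sequence {t_{2i+1} − t_{2i}} is suppression unconditional, i.e., its norm decreases when the support of a linear combination is diminished. -/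
open Finset

/-!
Let `V` be a combination of the differences and `U` the combination with the term
`a j • (t (2j+1) - t (2j))` dropped. For `k < N`, spread the pair `(2j, 2j+1)` to
`(2j+k, 2j+k+1)` and move all later indices beyond `2j+N`. By spreading invariance each of the
`N` spread copies of `V` has norm `‖V‖`, and all of them contain the same spread copy of `U`,
of norm `‖U‖`. Their sum telescopes in the moved pair: it is `N` times that copy of `U` plus
`a j • (t (2j+N) - t (2j))`. Hence `N ‖U‖ ≤ N ‖V‖ + 2 |a j| ‖t 0‖` for every `N`, so
`‖U‖ ≤ ‖V‖`, and removing indices one at a time gives the general case.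
-/

section

variable {X : Type*} [NormedAddCommGroup X] [NormedSpace ℝ X]

theorem SuppressionUnconditional.of_norm_sum_le_norm_sum_insert {e : ℕ → X}
    (h : ∀ (u : Finset ℕ) (a : ℕ → ℝ) (j : ℕ), j ∉ u →
      ‖∑ i ∈ u, a i • e i‖ ≤ ‖∑ i ∈ insert j u, a i • e i‖) :
    SuppressionUnconditional e := by
  intro s t hst a
  suffices ∀ r : Finset ℕ, ‖∑ i ∈ s, a i • e i‖ ≤ ‖∑ i ∈ s ∪ r, a i • e i‖ by
    simpa [union_eq_right.mpr hst] using this t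
  intro r
  induction r using Finset.induction_on with
  | empty => simp
  | insert j r _ ih =>
    rw [union_insert]
    by_cases hj : j ∈ s ∪ r
    · rwa [insert_eq_of_mem hj]
    · exact ih.trans (h _ a j hj)

theorem le_of_forall_nat_mul_le_mul_add {x y C : ℝ} (h : ∀ N : ℕ, N * x ≤ N * y + C) :
    x ≤ y := by
  by_contra! hxy
  obtain ⟨N, hN⟩ := exists_nat_gt (C / (x - y))
  have := (div_lt_iff₀ (sub_pos.mpr hxy)).mp hN
  linarith [h N]

theorem Finset.sum_range_two_mul {M : Type*} [AddCommMonoid M] (n : ℕ) (g : ℕ → M) :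
    ∑ m ∈ range (2 * n), g m = ∑ i ∈ range n, (g (2 * i) + g (2 * i + 1)) := by
  induction n with
  | zero => simp
  | succ n ih =>
    rw [show 2 * (n + 1) = 2 * n + 1 + 1 by ring, sum_range_succ, sum_range_succ, ih,
      sum_range_succ, add_assoc]

def pairCoeff (v : Finset ℕ) (c : ℕ → ℝ) (m : ℕ) : ℝ :=
  if m / 2 ∈ v then (if m % 2 = 0 then -c (m / 2) else c (m / 2)) else 0

theorem sum_smul_sub_eq_sum_pairCoeff (g : ℕ → X) (c : ℕ → ℝ) {v : Finset ℕ} {n : ℕ}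
    (hv : v ⊆ range n) :
    ∑ i ∈ v, c i • (g (2 * i + 1) - g (2 * i)) =
      ∑ m ∈ range (2 * n), pairCoeff v c m • g m := by
  have hpair : ∀ i, pairCoeff v c (2 * i) • g (2 * i) + pairCoeff v c (2 * i + 1) • g (2 * i + 1)
      = if i ∈ v then c i • (g (2 * i + 1) - g (2 * i)) else 0 := by
    intro i
    have h0 : 2 * i / 2 = i := by omega
    have h1 : (2 * i + 1) / 2 = i := by omega
    rw [pairCoeff, pairCoeff, h0, h1]
    by_cases hi : i ∈ v
    · simp [hi, smul_sub, neg_smul]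
      abel
    · simp [hi]
  rw [sum_range_two_mul, sum_congr rfl fun i _ => hpair i, sum_ite_mem, inter_eq_right.mpr hv]

def shiftPair (j k N m : ℕ) : ℕ :=
  if m < 2 * j then m else if m < 2 * j + 2 then m + k else m + N

theorem strictMono_shiftPair {j k N : ℕ} (hk : k ≤ N) : StrictMono (shiftPair j k N) :=
  strictMono_nat_of_lt_succ fun m => by unfold shiftPair; split_ifs <;> omega

theorem shiftPair_of_div_two_ne {j k N m : ℕ} (hm : m / 2 ≠ j) :
    shiftPair j k N m = shiftPair j 0 N m := by
  unfold shiftPair; split_ifs <;> omega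

namespace InvariantUnderSpreading

variable {t : ℕ → X}

theorem norm_eq (ht : InvariantUnderSpreading t) (i : ℕ) : ‖t i‖ = ‖t 0‖ := by
  simpa using ht (· + i) (strictMono_id.add_const i) 1 1

theorem norm_sum_smul_sub_comp (ht : InvariantUnderSpreading t) {f : ℕ → ℕ}
    (hf : StrictMono f) (v : Finset ℕ) (c : ℕ → ℝ) :
    ‖∑ i ∈ v, c i • (t (f (2 * i + 1)) - t (f (2 * i)))‖ =
      ‖∑ i ∈ v, c i • (t (2 * i + 1) - t (2 * i))‖ := by
  obtain ⟨n, hn⟩ := exists_nat_subset_range v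
  rw [sum_smul_sub_eq_sum_pairCoeff (fun m => t (f m)) c hn, sum_smul_sub_eq_sum_pairCoeff t c hn]
  exact ht f hf _ _

theorem nat_mul_norm_sum_le (ht : InvariantUnderSpreading t) {u : Finset ℕ} {j : ℕ}
    (hj : j ∉ u) (a : ℕ → ℝ) (N : ℕ) :
    N * ‖∑ i ∈ u, a i • (t (2 * i + 1) - t (2 * i))‖ ≤
      N * ‖∑ i ∈ insert j u, a i • (t (2 * i + 1) - t (2 * i))‖ + 2 * |a j| * ‖t 0‖ := by
  set V := ‖∑ i ∈ insert j u, a i • (t (2 * i + 1) - t (2 * i))‖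
  let W : ℕ → X := fun k =>
    ∑ i ∈ insert j u, a i • (t (shiftPair j k N (2 * i + 1)) - t (shiftPair j k N (2 * i)))
  set U := ∑ i ∈ u, a i • (t (shiftPair j 0 N (2 * i + 1)) - t (shiftPair j 0 N (2 * i)))
  have hW : ∀ k, W k = a j • (t (2 * j + (k + 1)) - t (2 * j + k)) + U := by
    intro k
    simp only [W, U, sum_insert hj]
    congr 1
    · simp only [shiftPair]
      congr 3 <;> split_ifs <;> omega
    · refine sum_congr rfl fun i hi => ?_
      have hij : i ≠ j := ne_of_mem_of_not_mem hi hj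
      rw [shiftPair_of_div_two_ne (by omega : (2 * i + 1) / 2 ≠ j),
        shiftPair_of_div_two_ne (by omega : 2 * i / 2 ≠ j)]
  have hsum : ∑ k ∈ range N, W k = a j • (t (2 * j + N) - t (2 * j)) + (N : ℝ) • U := by
    simp only [hW, sum_add_distrib, ← smul_sum, sum_range_sub (fun k => t (2 * j + k)),
      sum_const, card_range, Nat.cast_smul_eq_nsmul, add_zero]
  have hWnorm : ∀ k ∈ range N, ‖W k‖ = V := fun k hk =>
    ht.norm_sum_smul_sub_comp (strictMono_shiftPair (mem_range.mp hk).le) _ a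
  have hpair : ‖a j • (t (2 * j + N) - t (2 * j))‖ ≤ 2 * |a j| * ‖t 0‖ := by
    calc ‖a j • (t (2 * j + N) - t (2 * j))‖ = |a j| * ‖t (2 * j + N) - t (2 * j)‖ := by
          rw [norm_smul, Real.norm_eq_abs]
      _ ≤ |a j| * (‖t (2 * j + N)‖ + ‖t (2 * j)‖) := by gcongr; exact norm_sub_le _ _
      _ = 2 * |a j| * ‖t 0‖ := by rw [ht.norm_eq, ht.norm_eq (2 * j)]; ring
  calc (N : ℝ) * ‖∑ i ∈ u, a i • (t (2 * i + 1) - t (2 * i))‖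
      = ‖(N : ℝ) • U‖ := by
        rw [norm_smul, Real.norm_natCast,
          ht.norm_sum_smul_sub_comp (strictMono_shiftPair N.zero_le)]
    _ = ‖∑ k ∈ range N, W k - a j • (t (2 * j + N) - t (2 * j))‖ := by
        rw [hsum, add_sub_cancel_left]
    _ ≤ ∑ k ∈ range N, ‖W k‖ + ‖a j • (t (2 * j + N) - t (2 * j))‖ :=
        (norm_sub_le _ _).trans (add_le_add_left (norm_sum_le _ _) _)
    _ ≤ N * V + 2 * |a j| * ‖t 0‖ := by
        rw [sum_congr rfl hWnorm, sum_const, card_range, nsmul_eq_mul]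
        exact add_le_add_right hpair _

theorem norm_sum_le_norm_sum_insert (ht : InvariantUnderSpreading t) {u : Finset ℕ} {j : ℕ}
    (hj : j ∉ u) (a : ℕ → ℝ) :
    ‖∑ i ∈ u, a i • (t (2 * i + 1) - t (2 * i))‖ ≤
      ‖∑ i ∈ insert j u, a i • (t (2 * i + 1) - t (2 * i))‖ :=
  le_of_forall_nat_mul_le_mul_add (ht.nat_mul_norm_sum_le hj a)

end InvariantUnderSpreading

end

theorem statement3_general {X : Type*} [NormedAddCommGroup X] [NormedSpace ℝ X]
    (t : ℕ → X) (hspread : InvariantUnderSpreading t) :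
    SuppressionUnconditional (fun i => t (2 * i + 1) - t (2 * i)) :=
  .of_norm_sum_le_norm_sum_insert fun _ a _ hj => hspread.norm_sum_le_norm_sum_insert hj a

/-- If `{t_i}` is a normalized basic sequence invariant under
spreading, then the difference sequence `{t_{2i+1} - t_{2i}}` is suppression
unconditional. -/
theorem statement3 {X : Type*} [NormedAddCommGroup X] [NormedSpace ℝ X] [CompleteSpace X]
    (t : ℕ → X) (ht : IsBasicSeq t) (hnorm : ∀ i, ‖t i‖ = 1)
    (hspread : InvariantUnderSpreading t) :
    SuppressionUnconditional (fun i => t (2 * i + 1) - t (2 * i)) :=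
  statement3_general t hspread
end

section
/- Let {e_i} be a normalized suppression unconditional basis of a Banach space X, invariant under spreading, with biorthogonal functionals {e_i*} in X*. Let {x_n} be a normalized block basis of {e_i}, and let {x_n*} be a normalized block sequence of {e_i*} in X* with x_n*(x_n) = 1 and the support of x_n* contained in the support of x_n for each n. If {e_n*} K-dominates {x_n*}, then K‖Σ a_i x_i‖ ≥ ‖Σ a_i e_i‖ for every finitely supported scalar sequence (a_i), i.e., {x_n} (1/K)-dominates {e_n}. -/
open Finset

/-!
Norm `∑ aᵢ eᵢ` by a functional `g` of norm at most one and set `bᵢ = g(eᵢ)`. Since the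
coordinate projections of a suppression unconditional basis are contractive,
`‖∑ bᵢ eᵢ*‖ ≤ 1`, so by domination `φ = ∑ bᵢ xᵢ*` has norm at most `K`. As `(xᵢ*)` is
biorthogonal to the blocks `(xᵢ)`, `φ(∑ aᵢ xᵢ) = ∑ aᵢ bᵢ = ‖∑ aᵢ eᵢ‖`.
-/

section Biorthogonal

variable {X : Type*} [NormedAddCommGroup X] [NormedSpace ℝ X]
  {e : ℕ → X} {es : ℕ → StrongDual ℝ X}

lemma coord_sum_smul_of_biorthogonal (hbiorth : ∀ i j, es i (e j) = if i = j then 1 else 0)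
    (i : ℕ) (t : Finset ℕ) (c : ℕ → ℝ) :
    es i (∑ l ∈ t, c l • e l) = if i ∈ t then c i else 0 := by
  simp [map_sum, hbiorth, Finset.sum_ite_eq]

lemma sum_smul_dual_apply_eq_zero_of_disjoint
    (hbiorth : ∀ i j, es i (e j) = if i = j then 1 else 0)
    {s t : Finset ℕ} (hst : Disjoint s t) (d c : ℕ → ℝ) :
    (∑ k ∈ s, d k • es k) (∑ l ∈ t, c l • e l) = 0 := by
  simp only [FunLike.coe_sum, Finset.sum_apply, FunLike.coe_smul,
    Pi.smul_apply, coord_sum_smul_of_biorthogonal hbiorth]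
  exact Finset.sum_eq_zero fun k hk => by rw [if_neg (Finset.disjoint_left.1 hst hk), smul_zero]

lemma SuppressionUnconditional.norm_sum_coord_smul_le (hsupp : SuppressionUnconditional e)
    (hdense : Dense (Submodule.span ℝ (Set.range e) : Set X))
    (hbiorth : ∀ i j, es i (e j) = if i = j then 1 else 0) (s : Finset ℕ) (y : X) :
    ‖∑ i ∈ s, es i y • e i‖ ≤ ‖y‖ := by
  classical
  set P : X →L[ℝ] X := ∑ i ∈ s, (es i).smulRight (e i)
  have hP : ∀ z, P z = ∑ i ∈ s, es i z • e i := fun z => by simp [P]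
  suffices ∀ z, ‖P z‖ ≤ ‖z‖ by simpa only [hP] using this y
  refine hdense.induction (fun z hz => ?_)
    (isClosed_le (continuous_norm.comp P.continuous) continuous_norm)
  obtain ⟨l, rfl⟩ := Finsupp.mem_span_range_iff_exists_finsupp.1 hz
  have hproj : P (l.sum fun i a => a • e i) = ∑ i ∈ s ∩ l.support, l i • e i := by
    simp only [hP, Finsupp.sum, coord_sum_smul_of_biorthogonal hbiorth, ite_smul, zero_smul,
      Finset.sum_ite_mem]
  rw [hproj, Finsupp.sum]
  exact hsupp _ _ Finset.inter_subset_right l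

lemma norm_sum_apply_smul_dual_le {n : ℕ}
    (hproj : ∀ y, ‖∑ i ∈ Finset.range n, es i y • e i‖ ≤ ‖y‖) (g : StrongDual ℝ X) :
    ‖∑ i ∈ Finset.range n, g (e i) • es i‖ ≤ ‖g‖ := by
  refine ContinuousLinearMap.opNorm_le_bound _ (norm_nonneg g) fun y => ?_
  have hg : (∑ i ∈ Finset.range n, g (e i) • es i) y =
      g (∑ i ∈ Finset.range n, es i y • e i) := by
    simp [map_sum, mul_comm]
  rw [hg]
  exact (g.le_opNorm _).trans (mul_le_mul_of_nonneg_left (hproj y) (norm_nonneg g))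

lemma norm_sum_smul_le_of_dominates_biorthogonal {x : ℕ → X} {xs : ℕ → StrongDual ℝ X}
    (hproj : ∀ n y, ‖∑ i ∈ Finset.range n, es i y • e i‖ ≤ ‖y‖)
    (hxsx : ∀ i j, xs i (x j) = if i = j then 1 else 0)
    {K : ℝ} (hK : 0 ≤ K) (hdom : Dominates K es xs) (n : ℕ) (a : ℕ → ℝ) :
    ‖∑ i ∈ Finset.range n, a i • e i‖ ≤ K * ‖∑ i ∈ Finset.range n, a i • x i‖ := by
  obtain ⟨g, hg, hgv⟩ := exists_dual_vector'' ℝ (∑ i ∈ Finset.range n, a i • e i)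
  set φ := ∑ i ∈ Finset.range n, g (e i) • xs i
  have hφ : ‖φ‖ ≤ K :=
    calc ‖φ‖ ≤ K * ‖∑ i ∈ Finset.range n, g (e i) • es i‖ := hdom n _
      _ ≤ K * 1 := by gcongr; exact (norm_sum_apply_smul_dual_le (hproj n) g).trans hg
      _ = K := mul_one K
  have hφx : φ (∑ j ∈ Finset.range n, a j • x j) = g (∑ i ∈ Finset.range n, a i • e i) := by
    simp +contextual [φ, map_sum, hxsx, mul_comm]
  calc ‖∑ i ∈ Finset.range n, a i • e i‖ = φ (∑ j ∈ Finset.range n, a j • x j) := by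
        rw [hφx, hgv, RCLike.ofReal_real_eq_id, id]
    _ ≤ ‖φ (∑ j ∈ Finset.range n, a j • x j)‖ := Real.le_norm_self _
    _ ≤ ‖φ‖ * ‖∑ j ∈ Finset.range n, a j • x j‖ := φ.le_opNorm _
    _ ≤ K * ‖∑ j ∈ Finset.range n, a j • x j‖ := by gcongr

end Biorthogonal

lemma disjoint_Ico_of_blocks {A B : ℕ → ℕ} (hAB : ∀ n, A n < B n)
    (hBA : ∀ n, B n ≤ A (n + 1)) {i j : ℕ} (hij : i ≠ j) :
    Disjoint (Finset.Ico (A i) (B i)) (Finset.Ico (A j) (B j)) := by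
  have hA : Monotone A := monotone_nat_of_le_succ fun n => (hAB n).le.trans (hBA n)
  have hBA' : ∀ {m n}, m < n → B m ≤ A n := fun hmn => (hBA _).trans (hA hmn)
  rw [Finset.disjoint_left]
  intro k hki hkj
  simp only [Finset.mem_Ico] at hki hkj
  rcases hij.lt_or_gt with h | h <;> linarith [hBA' h]

theorem statement9_general {X : Type*} [NormedAddCommGroup X] [NormedSpace ℝ X]
    (e : ℕ → X) (es : ℕ → StrongDual ℝ X)
    (hsupp : SuppressionUnconditional e)
    (hdense : Dense (Submodule.span ℝ (Set.range e) : Set X))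
    (hbiorth : ∀ i j, es i (e j) = if i = j then 1 else 0)
    (A B : ℕ → ℕ) (c d : ℕ → ℝ)
    (hAB : ∀ n, A n < B n) (hBA : ∀ n, B n ≤ A (n + 1))
    (x : ℕ → X) (xs : ℕ → StrongDual ℝ X)
    (hx : ∀ n, x n = ∑ i ∈ Finset.Ico (A n) (B n), c i • e i)
    (hxs : ∀ n, xs n = ∑ i ∈ Finset.Ico (A n) (B n), d i • es i)
    (heval : ∀ n, xs n (x n) = 1)
    (K : ℝ) (hK : 0 < K) (hdom : Dominates K es xs) :
    ∀ (n : ℕ) (a : ℕ → ℝ),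
      ‖∑ i ∈ Finset.range n, a i • e i‖ ≤ K * ‖∑ i ∈ Finset.range n, a i • x i‖ := by
  have hxsx : ∀ i j, xs i (x j) = if i = j then 1 else 0 := by
    intro i j
    split_ifs with hij
    · exact hij ▸ heval i
    · rw [hxs, hx]
      exact sum_smul_dual_apply_eq_zero_of_disjoint hbiorth
        (disjoint_Ico_of_blocks hAB hBA hij) d c
  exact norm_sum_smul_le_of_dominates_biorthogonal
    (fun n => hsupp.norm_sum_coord_smul_le hdense hbiorth (Finset.range n)) hxsx hK.le hdom

/-- Let `{e_i}` be a normalized suppression unconditional basis of a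
Banach space `X`, invariant under spreading, with biorthogonal functionals `{e_i*}`.
Let `{x_n}` be a normalized block basis of `{e_i}` and `{x_n*}` a normalized block
sequence of `{e_i*}` with `x_n*(x_n) = 1` and `supp x_n* ⊆ supp x_n`. If `{e_n*}`
`K`-dominates `{x_n*}`, then `K‖Σ a_i x_i‖ ≥ ‖Σ a_i e_i‖` for all finitely supported
`(a_i)`, i.e. `{x_n}` `(1/K)`-dominates `{e_n}`. -/
theorem statement9 {X : Type*} [NormedAddCommGroup X] [NormedSpace ℝ X] [CompleteSpace X]
    (e : ℕ → X) (es : ℕ → StrongDual ℝ X)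
    (he : IsBasicSeq e) (hnorm : ∀ i, ‖e i‖ = 1)
    (hsupp : SuppressionUnconditional e) (hspread : InvariantUnderSpreading e)
    (hdense : Dense (Submodule.span ℝ (Set.range e) : Set X))
    (hbiorth : ∀ i j, es i (e j) = if i = j then 1 else 0)
    (A B : ℕ → ℕ) (c d : ℕ → ℝ)
    (hAB : ∀ n, A n < B n) (hBA : ∀ n, B n ≤ A (n + 1))
    (x : ℕ → X) (xs : ℕ → StrongDual ℝ X)
    (hx : ∀ n, x n = ∑ i ∈ Finset.Ico (A n) (B n), c i • e i)
    (hxs : ∀ n, xs n = ∑ i ∈ Finset.Ico (A n) (B n), d i • es i)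
    (hxnorm : ∀ n, ‖x n‖ = 1) (hxsnorm : ∀ n, ‖xs n‖ = 1)
    (hsupport : ∀ i, d i ≠ 0 → c i ≠ 0)
    (heval : ∀ n, xs n (x n) = 1)
    (K : ℝ) (hK : 0 < K) (hdom : Dominates K es xs) :
    ∀ (n : ℕ) (a : ℕ → ℝ),
      ‖∑ i ∈ Finset.range n, a i • e i‖ ≤ K * ‖∑ i ∈ Finset.range n, a i • x i‖ :=
  statement9_general e es hsupp hdense hbiorth A B c d hAB hBA x xs hx hxs heval K hK hdom
end

section
/- Let X be a separable Banach space. If X* is separable, then either X contains continuum many pairwise non-equivalent spreading models generated by weakly null seminormalized basic sequences, or at most countably many such non-equivalent spreading models. Similarly, if X has a Schauder basis, then either X contains continuum many pairwise non-equivalent spreading models generated by block basic sequences of the basis, or at most countably many such non-equivalent spreading models. -/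
open Finset

/-!
Each class of sequences is coded by a closed subset of a Polish space. A code is the sequence
together with a modulus `μ` that makes the convergence of the norms of its spread sums uniform
over coefficients in `[-1, 1]`, and with the data witnessing membership in the class (norm bounds
and basis constant, thresholds of weak nullity against a dense sequence of `X*`, or the blocks).
For sequences with a lower `ℓ_∞`-estimate the modulus turns equivalence of spreading models into
an `F_σ` relation on codes, the union over `n` of the closed relations "`(n + 1)`-equivalence of
all spread sums of length `k + 1` starting beyond both moduli `μ k n`".

An `F_σ` relation `R` on a Polish space either relates every point to one of countably many
points, or has a Cantor set of pairwise unrelated points: around the points none of whose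
neighbourhoods is covered by countably many sections of `R`, a binary tree of closed balls can be
chosen so that distinct balls of level `n` are unrelated by the first `n` closed pieces of `R`.
The Cantor set contains a copy of `ℝ`.
-/

namespace SpreadingModel

open Metric Filter Topology TopologicalSpace

section PerfectSet

open Set

section SectionCover

variable {M : Type*}

def SectionCovered (R : Set (M × M)) (S : Set M) : Prop :=
  ∃ D : Set M, D.Countable ∧ ∀ x ∈ S, ∃ d ∈ D, (x, d) ∈ R

variable {R : Set (M × M)} {S T : Set M}

theorem SectionCovered.mono (hT : SectionCovered R T) (hST : S ⊆ T) : SectionCovered R S :=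
  let ⟨D, hD, hcov⟩ := hT
  ⟨D, hD, fun x hx => hcov x (hST hx)⟩

theorem SectionCovered.union (hS : SectionCovered R S) (hT : SectionCovered R T) :
    SectionCovered R (S ∪ T) := by
  obtain ⟨D, hD, hS⟩ := hS
  obtain ⟨E, hE, hT⟩ := hT
  refine ⟨D ∪ E, hD.union hE, ?_⟩
  rintro x (hx | hx)
  · obtain ⟨d, hd, h⟩ := hS x hx
    exact ⟨d, Or.inl hd, h⟩
  · obtain ⟨d, hd, h⟩ := hT x hx
    exact ⟨d, Or.inr hd, h⟩

theorem sectionCovered_biUnion {ι : Type*} {I : Set ι} (hI : I.Countable) {S : ι → Set M}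
    (h : ∀ i ∈ I, SectionCovered R (S i)) : SectionCovered R (⋃ i ∈ I, S i) := by
  choose! D hD hcov using h
  refine ⟨⋃ i ∈ I, D i, hI.biUnion hD, fun x hx => ?_⟩
  obtain ⟨i, hi, hx⟩ := mem_iUnion₂.mp hx
  obtain ⟨d, hd, h⟩ := hcov i hi x hx
  exact ⟨d, mem_iUnion₂.mpr ⟨i, hi, hd⟩, h⟩

end SectionCover

section Kernel

variable {M : Type*} [PseudoMetricSpace M] {R : Set (M × M)}

def coverKernel (R : Set (M × M)) : Set M :=
  {x | ∀ ε > 0, ¬ SectionCovered R (ball x ε)}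

theorem sectionCovered_compl_coverKernel [SecondCountableTopology M] :
    SectionCovered R (coverKernel R)ᶜ := by
  let I := {p : M × ℝ // SectionCovered R (ball p.1 p.2)}
  obtain ⟨T, hT, hTU⟩ :=
    isOpen_iUnion_countable (fun p : I => ball p.1.1 p.1.2) fun _ => isOpen_ball
  refine (sectionCovered_biUnion hT fun p _ => p.2).mono fun x hx => ?_
  simp only [coverKernel, mem_compl_iff, mem_ofPred_eq, not_forall, not_not] at hx
  obtain ⟨ε, hε, hcov⟩ := hx
  rw [hTU]
  exact mem_iUnion.mpr ⟨⟨(x, ε), hcov⟩, mem_ball_self hε⟩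

def NowhereSectionCovered (R : Set (M × M)) (K : Set M) : Prop :=
  ∀ x ∈ K, ∀ ε > 0, ¬ SectionCovered R (ball x ε ∩ K)

theorem nowhereSectionCovered_coverKernel [SecondCountableTopology M] :
    NowhereSectionCovered R (coverKernel R) := fun x hx ε hε h =>
  hx ε hε <| (h.union sectionCovered_compl_coverKernel).mono fun y hy => by
    by_cases hyK : y ∈ coverKernel R
    · exact Or.inl ⟨hy, hyK⟩
    · exact Or.inr hyK

end Kernel

section CantorScheme

variable {M : Type*} [PseudoMetricSpace M] {R : Set (M × M)} {K : Set M}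

theorem exists_closedBalls_prod_disjoint (hK : NowhereSectionCovered R K)
    {F : Set (M × M)} (hF : IsClosed F) (hFR : F ⊆ R)
    {x₁ x₂ : M} (hx₁ : x₁ ∈ K) (hx₂ : x₂ ∈ K) {r₁ r₂ : ℝ} (hr₁ : 0 < r₁) (hr₂ : 0 < r₂) :
    ∃ y₁ ∈ K, ∃ y₂ ∈ K, ∃ s > 0, closedBall y₁ s ⊆ ball x₁ r₁ ∧ closedBall y₂ s ⊆ ball x₂ r₂ ∧
      Disjoint (closedBall y₁ s ×ˢ closedBall y₂ s) F := by
  -- otherwise `ball x₁ r₁ ∩ K` would be covered by the single section of `x₂`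
  obtain ⟨y₁, ⟨hy₁, hy₁K⟩, hy₁F⟩ : ∃ y₁ ∈ ball x₁ r₁ ∩ K, (y₁, x₂) ∉ F := by
    by_contra! h
    exact hK x₁ hx₁ r₁ hr₁ ⟨{x₂}, countable_singleton _, fun y hy => ⟨x₂, rfl, hFR (h y hy)⟩⟩
  obtain ⟨ε, hε, hεF⟩ := Metric.isOpen_iff.mp hF.isOpen_compl _ hy₁F
  have hd : dist y₁ x₁ < r₁ := hy₁
  set s := min (ε / 2) (min ((r₁ - dist y₁ x₁) / 2) (r₂ / 2))
  have hs : 0 < s := lt_min (by linarith) (lt_min (by linarith) (by linarith))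
  have hsε : s < ε := (min_le_left _ _).trans_lt (by linarith)
  have hs₁ : s ≤ (r₁ - dist y₁ x₁) / 2 := (min_le_right _ _).trans (min_le_left _ _)
  have hs₂ : s ≤ r₂ / 2 := (min_le_right _ _).trans (min_le_right _ _)
  refine ⟨y₁, hy₁K, x₂, hx₂, s, hs, closedBall_subset_ball' (by linarith),
    closedBall_subset_ball' (by rw [dist_self]; linarith), ?_⟩
  rw [← subset_compl_iff_disjoint_right, ← ball_prod_same] at *
  exact (Set.prod_mono (closedBall_subset_ball hsε) (closedBall_subset_ball hsε)).trans hεF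

theorem exists_shrink_pair_disjoint (hK : NowhereSectionCovered R K) {ι : Type*} [DecidableEq ι]
    {F : Set (M × M)} (hF : IsClosed F) (hFR : F ⊆ R) {c : ι → M} {r : ι → ℝ}
    (hc : ∀ k, c k ∈ K) (hr : ∀ k, 0 < r k) {i j : ι} (hij : i ≠ j) :
    ∃ (c' : ι → M) (r' : ι → ℝ),
      (∀ k, c' k ∈ K ∧ 0 < r' k ∧ closedBall (c' k) (r' k) ⊆ closedBall (c k) (r k)) ∧
      Disjoint (closedBall (c' i) (r' i) ×ˢ closedBall (c' j) (r' j)) F := by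
  obtain ⟨y₁, hy₁, y₂, hy₂, s, hs, hsub₁, hsub₂, hdisj⟩ :=
    exists_closedBalls_prod_disjoint hK hF hFR (hc i) (hc j) (hr i) (hr j)
  refine ⟨Function.update (Function.update c i y₁) j y₂,
    Function.update (Function.update r i s) j s, fun k => ?_,
    by simpa only [Function.update_self, Function.update_of_ne hij] using hdisj⟩
  by_cases hkj : k = j
  · subst hkj
    simp only [Function.update_self]
    exact ⟨hy₂, hs, hsub₂.trans ball_subset_closedBall⟩
  by_cases hki : k = i
  · subst hki
    simp only [Function.update_self, Function.update_of_ne hij]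
    exact ⟨hy₁, hs, hsub₁.trans ball_subset_closedBall⟩
  simp only [Function.update_of_ne hkj, Function.update_of_ne hki]
  exact ⟨hc k, hr k, subset_rfl⟩

theorem exists_closedBalls_pairwise_disjoint (hK : NowhereSectionCovered R K) {ι : Type*}
    [Fintype ι] {F : Set (M × M)} (hF : IsClosed F) (hFR : F ⊆ R) (c : ι → M) (r : ι → ℝ)
    (hc : ∀ i, c i ∈ K) (hr : ∀ i, 0 < r i) :
    ∃ (c' : ι → M) (r' : ι → ℝ),
      (∀ i, c' i ∈ K ∧ 0 < r' i ∧ closedBall (c' i) (r' i) ⊆ ball (c i) (r i)) ∧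
      Pairwise fun i j => Disjoint (closedBall (c' i) (r' i) ×ˢ closedBall (c' j) (r' j)) F := by
  classical
  suffices ∀ P : Finset (ι × ι), ∃ (c' : ι → M) (r' : ι → ℝ),
      (∀ i, c' i ∈ K ∧ 0 < r' i ∧ closedBall (c' i) (r' i) ⊆ ball (c i) (r i)) ∧
      ∀ p ∈ P, p.1 ≠ p.2 →
        Disjoint (closedBall (c' p.1) (r' p.1) ×ˢ closedBall (c' p.2) (r' p.2)) F by
    obtain ⟨c', r', h, hsep⟩ := this Finset.univ
    exact ⟨c', r', h, fun i j hij => hsep (i, j) (Finset.mem_univ _) hij⟩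
  intro P
  induction P using Finset.induction_on with
  | empty =>
    exact ⟨c, fun i => r i / 2, fun i => ⟨hc i, half_pos (hr i),
      closedBall_subset_ball (half_lt_self (hr i))⟩, by simp⟩
  | @insert p P _ ih =>
    obtain ⟨c', r', h, hsep⟩ := ih
    by_cases hp : p.1 = p.2
    · refine ⟨c', r', h, fun q hq hq' => ?_⟩
      rcases Finset.mem_insert.mp hq with rfl | hq
      · exact absurd hp hq'
      · exact hsep q hq hq'
    obtain ⟨c'', r'', h', hdisj⟩ :=
      exists_shrink_pair_disjoint hK hF hFR (fun i => (h i).1) (fun i => (h i).2.1) hp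
    refine ⟨c'', r'', fun i => ⟨(h' i).1, (h' i).2.1, (h' i).2.2.trans (h i).2.2⟩,
      fun q hq hq' => ?_⟩
    rcases Finset.mem_insert.mp hq with rfl | hq
    · exact hdisj
    · exact (hsep q hq hq').mono_left (Set.prod_mono (h' q.1).2.2 (h' q.2).2.2)

theorem exists_closedBall_tree (hK : NowhereSectionCovered R K) {F : ℕ → Set (M × M)}
    (hF : ∀ n, IsClosed (F n)) (hFR : ∀ n, F n ⊆ R) (hKne : K.Nonempty) :
    ∃ (c : (n : ℕ) → (Fin n → Bool) → M) (r : (n : ℕ) → (Fin n → Bool) → ℝ),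
      (∀ n σ, 0 < r n σ) ∧
      (∀ n, Pairwise fun σ τ =>
        Disjoint (closedBall (c n σ) (r n σ) ×ˢ closedBall (c n τ) (r n τ)) (F n)) ∧
      ∀ n σ, closedBall (c (n + 1) σ) (r (n + 1) σ) ⊆
          closedBall (c n (Fin.init σ)) (r n (Fin.init σ)) ∧
        dist (c (n + 1) σ) (c n (Fin.init σ)) ≤ (1 / 2) ^ n := by
  obtain ⟨x₀, hx₀⟩ := hKne
  let Level (n : ℕ) := ((Fin n → Bool) → M) × ((Fin n → Bool) → ℝ)
  let Good (n : ℕ) (p : Level n) : Prop := (∀ σ, p.1 σ ∈ K ∧ 0 < p.2 σ) ∧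
    Pairwise fun σ τ => Disjoint (closedBall (p.1 σ) (p.2 σ) ×ˢ closedBall (p.1 τ) (p.2 τ)) (F n)
  -- the implication inside the existential makes `step` total, so that `choose` applies
  have step (n : ℕ) (p : Level n) : ∃ p' : Level (n + 1), Good n p → Good (n + 1) p' ∧
      ∀ σ : Fin (n + 1) → Bool,
        closedBall (p'.1 σ) (p'.2 σ) ⊆ closedBall (p.1 (Fin.init σ)) (p.2 (Fin.init σ)) ∧
          dist (p'.1 σ) (p.1 (Fin.init σ)) ≤ (1 / 2) ^ n := by
    by_cases hp : Good n p
    swap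
    · exact ⟨(fun _ => x₀, fun _ => 1), fun h => absurd h hp⟩
    obtain ⟨c', r', h, hsep⟩ := exists_closedBalls_pairwise_disjoint hK (hF (n + 1))
      (hFR (n + 1)) (fun σ : Fin (n + 1) → Bool => p.1 (Fin.init σ))
      (fun σ => min (p.2 (Fin.init σ)) ((1 / 2) ^ n)) (fun σ => (hp.1 _).1)
      (fun σ => lt_min (hp.1 _).2 (by positivity))
    refine ⟨(c', r'), fun _ => ⟨⟨fun σ => ⟨(h σ).1, (h σ).2.1⟩, hsep⟩, fun σ => ⟨?_, ?_⟩⟩⟩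
    · exact (h σ).2.2.trans
        (ball_subset_closedBall.trans (closedBall_subset_closedBall (min_le_left _ _)))
    · exact (mem_ball.mp ((h σ).2.2 (mem_closedBall_self (h σ).2.1.le))).le.trans
        (min_le_right _ _)
  choose next hnext using step
  let T (n : ℕ) : Level n := Nat.rec (motive := Level) (fun _ => x₀, fun _ => 1) next n
  have hgood (n : ℕ) : Good n (T n) := by
    induction n with
    | zero => exact ⟨fun _ => ⟨hx₀, one_pos⟩, fun σ τ h => absurd (Subsingleton.elim σ τ) h⟩
    | succ n ih => exact (hnext n (T n) ih).1
  exact ⟨fun n => (T n).1, fun n => (T n).2, fun n σ => ((hgood n).1 σ).2, fun n => (hgood n).2,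
    fun n => (hnext n (T n) (hgood n)).2⟩

theorem exists_cantor_family [CompleteSpace M] (hK : NowhereSectionCovered R K)
    {F : ℕ → Set (M × M)} (hF : ∀ n, IsClosed (F n)) (hFR : ∀ n, F n ⊆ R) (hmono : Monotone F)
    (hKne : K.Nonempty) :
    ∃ G : (ℕ → Bool) → M, Pairwise fun b b' => ∀ n, (G b, G b') ∉ F n := by
  obtain ⟨c, r, hr, hsep, hrefine⟩ := exists_closedBall_tree hK hF hFR hKne
  let u (b : ℕ → Bool) (n : ℕ) : M := c n fun i => b i
  let B (b : ℕ → Bool) (n : ℕ) : Set M := closedBall (u b n) (r n fun i => b i)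
  have hnest (b : ℕ → Bool) {n m : ℕ} (hnm : n ≤ m) : B b m ⊆ B b n := by
    induction m, hnm using Nat.le_induction with
    | base => exact subset_rfl
    | succ m _ ih => exact ((hrefine m fun i => b i).1).trans ih
  have hcauchy (b : ℕ → Bool) : CauchySeq (u b) :=
    cauchySeq_of_le_geometric (1 / 2) 1 (by norm_num) fun n => by
      rw [dist_comm, one_mul]
      exact (hrefine n fun i => b i).2
  choose G hG using fun b => cauchySeq_tendsto_of_complete (hcauchy b)
  have hGmem (b : ℕ → Bool) (n : ℕ) : G b ∈ B b n :=
    isClosed_closedBall.mem_of_tendsto (hG b) <| (eventually_ge_atTop n).mono fun m hm =>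
      hnest b hm (mem_closedBall_self (hr m _).le)
  refine ⟨G, fun b b' hbb' n hn => ?_⟩
  obtain ⟨j, hj⟩ := Function.ne_iff.mp hbb'
  have hne : (fun i : Fin (max n (j + 1)) => b i) ≠ fun i : Fin _ => b' i := fun h =>
    hj (congrFun h ⟨j, by omega⟩)
  exact Set.disjoint_left.mp (hsep _ hne) ⟨hGmem b _, hGmem b' _⟩ (hmono (le_max_left _ _) hn)

end CantorScheme

theorem exists_cantor_family_or_sectionCovered {M : Type*} [TopologicalSpace M] [PolishSpace M]
    {F : ℕ → Set (M × M)} (hF : ∀ n, IsClosed (F n)) :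
    (∃ G : (ℕ → Bool) → M, Pairwise fun b b' => (G b, G b') ∉ ⋃ n, F n) ∨
      SectionCovered (⋃ n, F n) univ := by
  let _ := upgradeIsCompletelyMetrizable M
  by_cases hcov : SectionCovered (⋃ n, F n) univ
  · exact Or.inr hcov
  have hKne : (coverKernel (⋃ n, F n)).Nonempty := by
    by_contra hK
    exact hcov (sectionCovered_compl_coverKernel.mono fun x _ hx => hK ⟨x, hx⟩)
  obtain ⟨G, hG⟩ := exists_cantor_family nowhereSectionCovered_coverKernel
    (F := fun n => ⋃ i ≤ n, F i) (fun n => (finite_Iic n).isClosed_biUnion fun i _ => hF i)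
    (fun n => iUnion₂_subset fun i _ => subset_iUnion F i)
    (fun m n hmn => biUnion_mono (fun i hi => le_trans hi hmn) fun _ _ => subset_rfl) hKne
  refine Or.inl ⟨G, fun b b' hbb' hmem => ?_⟩
  obtain ⟨n, hn⟩ := mem_iUnion.mp hmem
  exact hG hbb' n (mem_biUnion (le_refl n) hn)

end PerfectSet


section SpreadSums

variable {X : Type*} [NormedAddCommGroup X] [NormedSpace ℝ X] {x : ℕ → X} {k : ℕ}

def spreadSum (x : ℕ → X) (k : ℕ) (a : ℕ → ℝ) (l : ℕ → ℕ) : X :=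
  ∑ i ∈ range (k + 1), a i • x (l i)

theorem spreadSum_smul (t : ℝ) (a : ℕ → ℝ) (l : ℕ → ℕ) :
    spreadSum x k (t • a) l = t • spreadSum x k a l := by
  simp only [spreadSum, Finset.smul_sum, Pi.smul_apply, smul_smul, smul_eq_mul]

theorem spreadSum_eq_zero {a : ℕ → ℝ} (ha : ∀ i ≤ k, a i = 0) (l : ℕ → ℕ) :
    spreadSum x k a l = 0 :=
  Finset.sum_eq_zero fun i hi => by rw [ha i (Nat.lt_succ_iff.mp (mem_range.mp hi)), zero_smul]

theorem norm_spreadSum_sub_le {C : ℝ} (hC : ∀ i, ‖x i‖ ≤ C) {a b : ℕ → ℝ} {δ : ℝ}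
    (hab : ∀ i ≤ k, |a i - b i| ≤ δ) (l : ℕ → ℕ) :
    ‖spreadSum x k a l - spreadSum x k b l‖ ≤ (k + 1) * δ * C := by
  rw [spreadSum, spreadSum, ← Finset.sum_sub_distrib]
  refine (norm_sum_le _ _).trans ?_
  calc ∑ i ∈ range (k + 1), ‖a i • x (l i) - b i • x (l i)‖
      ≤ ∑ _i ∈ range (k + 1), δ * C := Finset.sum_le_sum fun i hi => by
        rw [← sub_smul, norm_smul, Real.norm_eq_abs]
        exact mul_le_mul (hab i (Nat.lt_succ_iff.mp (mem_range.mp hi))) (hC _) (norm_nonneg _)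
          ((abs_nonneg _).trans (hab 0 (Nat.zero_le _)))
    _ = (k + 1) * δ * C := by
      simp only [Finset.sum_const, card_range, nsmul_eq_mul]
      push_cast
      ring

theorem continuous_spreadSum (k : ℕ) (a : ℕ → ℝ) (l : ℕ → ℕ) :
    Continuous fun x : ℕ → X => spreadSum x k a l := by
  unfold spreadSum
  fun_prop

theorem _root_.GeneratesASpreadingModel.exists_abs_sub_lt (hx : GeneratesASpreadingModel x) (k : ℕ)
    (a : ℕ → ℝ) {ε : ℝ} (hε : 0 < ε) :
    ∃ N, ∀ l l' : ℕ → ℕ, StrictMono l → StrictMono l' → N < l 0 → N < l' 0 →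
      |‖spreadSum x k a l‖ - ‖spreadSum x k a l'‖| < ε := by
  obtain ⟨t, ht⟩ := hx k a
  obtain ⟨N, hN⟩ := ht (ε / 2) (half_pos hε)
  refine ⟨N, fun l l' hl hl' h0 h0' => ?_⟩
  have h := hN l hl h0
  have h' := hN l' hl' h0'
  rw [abs_sub_lt_iff] at h h' ⊢
  unfold spreadSum
  constructor <;> linarith

theorem generatesASpreadingModel_of_cauchy
    (h : ∀ k a ε, 0 < ε → ∃ N, ∀ l l' : ℕ → ℕ, StrictMono l → StrictMono l' → N < l 0 →
      N < l' 0 → |‖spreadSum x k a l‖ - ‖spreadSum x k a l'‖| < ε) :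
    GeneratesASpreadingModel x := by
  intro k a
  let g (n : ℕ) : ℝ := ‖spreadSum x k a fun i => n + 1 + i‖
  have hg : CauchySeq g := Metric.cauchySeq_iff'.mpr fun ε hε => by
    obtain ⟨N, hN⟩ := h k a ε hε
    exact ⟨N, fun n hn => hN _ _ (add_right_strictMono (a := n + 1)) (add_right_strictMono (a := N + 1))
      (by omega) (by omega)⟩
  obtain ⟨t, ht⟩ := cauchySeq_tendsto_of_complete hg
  refine ⟨t, fun ε hε => ?_⟩
  obtain ⟨N, hN⟩ := h k a (ε / 2) (half_pos hε)
  obtain ⟨n, hnN, hn⟩ := ((eventually_ge_atTop N).and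
    (Metric.tendsto_nhds.mp ht (ε / 2) (half_pos hε))).exists
  refine ⟨N, fun l hl h0 => ?_⟩
  have h1 := hN l _ hl (add_right_strictMono (a := n + 1)) h0 (by omega)
  rw [Real.dist_eq] at hn
  calc |‖∑ i ∈ range (k + 1), a i • x (l i)‖ - t|
      ≤ |‖spreadSum x k a l‖ - g n| + |g n - t| := abs_sub_le _ _ _
    _ < ε / 2 + ε / 2 := add_lt_add h1 hn
    _ = ε := add_halves ε

def IsSpreadingModulus (x : ℕ → X) (μ : ℕ → ℕ → ℕ) : Prop :=
  ∀ k m (l l' : ℕ → ℕ), StrictMono l → StrictMono l' → μ k m < l 0 → μ k m < l' 0 →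
    ∀ a : ℕ → ℝ, (∀ i ≤ k, |a i| ≤ 1) →
      |‖spreadSum x k a l‖ - ‖spreadSum x k a l'‖| ≤ (1 / 2) ^ m

variable {μ : ℕ → ℕ → ℕ}

theorem IsSpreadingModulus.abs_sub_le (hμ : IsSpreadingModulus x μ) {m : ℕ} {l l' : ℕ → ℕ}
    (hl : StrictMono l) (hl' : StrictMono l') (h0 : μ k m < l 0) (h0' : μ k m < l' 0)
    {a : ℕ → ℝ} {t : ℝ} (ha : ∀ i ≤ k, |a i| ≤ t) :
    |‖spreadSum x k a l‖ - ‖spreadSum x k a l'‖| ≤ (1 / 2) ^ m * t := by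
  rcases ((abs_nonneg _).trans (ha 0 (Nat.zero_le k))).eq_or_lt with rfl | ht
  · have ha0 : ∀ i ≤ k, a i = 0 := fun i hi => abs_nonpos_iff.mp (ha i hi)
    simp [spreadSum_eq_zero ha0]
  obtain ⟨b, rfl⟩ : ∃ b, a = t • b :=
    ⟨t⁻¹ • a, by rw [smul_smul, mul_inv_cancel₀ ht.ne', one_smul]⟩
  have hb : ∀ i ≤ k, |b i| ≤ 1 := fun i hi => by
    have := ha i hi
    rwa [Pi.smul_apply, smul_eq_mul, abs_mul, abs_of_pos ht, mul_le_iff_le_one_right ht] at this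
  rw [spreadSum_smul, spreadSum_smul, norm_smul, norm_smul, Real.norm_eq_abs,
    abs_of_pos ht, ← mul_sub, abs_mul, abs_of_pos ht, mul_comm]
  exact mul_le_mul_of_nonneg_right (hμ k m l l' hl hl' h0 h0' _ hb) ht.le

theorem IsSpreadingModulus.generatesASpreadingModel (hμ : IsSpreadingModulus x μ) :
    GeneratesASpreadingModel x := by
  refine generatesASpreadingModel_of_cauchy fun k a ε hε => ?_
  set t := ∑ i ∈ range (k + 1), |a i|
  have ht : ∀ i ≤ k, |a i| ≤ t := fun i hi =>
    Finset.single_le_sum (fun j _ => abs_nonneg (a j)) (mem_range.mpr (Nat.lt_succ_of_le hi))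
  obtain ⟨m, hm⟩ := exists_pow_lt_of_lt_one (div_pos hε (by positivity : (0 : ℝ) < t + 1))
    (by norm_num : (1 / 2 : ℝ) < 1)
  refine ⟨μ k m, fun l l' hl hl' h0 h0' => (hμ.abs_sub_le hl hl' h0 h0' ht).trans_lt ?_⟩
  calc (1 / 2) ^ m * t ≤ (1 / 2) ^ m * (t + 1) := by gcongr; linarith
    _ < ε / (t + 1) * (t + 1) := by gcongr
    _ = ε := div_mul_cancel₀ ε (by positivity)

theorem _root_.GeneratesASpreadingModel.exists_isSpreadingModulus (hx : GeneratesASpreadingModel x)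
    {C : ℝ} (hC : ∀ i, ‖x i‖ ≤ C) : ∃ μ, IsSpreadingModulus x μ := by
  suffices h : ∀ k m, ∃ N, ∀ l l' : ℕ → ℕ, StrictMono l → StrictMono l' → N < l 0 → N < l' 0 →
      ∀ a : ℕ → ℝ, (∀ i ≤ k, |a i| ≤ 1) →
        |‖spreadSum x k a l‖ - ‖spreadSum x k a l'‖| ≤ (1 / 2) ^ m by
    choose μ hμ using h
    exact ⟨μ, hμ⟩
  intro k m
  set ε : ℝ := (1 / 2) ^ m
  have hC0 : 0 ≤ C := (norm_nonneg _).trans (hC 0)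
  set δ : ℝ := ε / (3 * (k + 1) * (C + 1))
  have hδC : (k + 1) * δ * C ≤ ε / 3 :=
    calc (k + 1) * δ * C ≤ (k + 1) * δ * (C + 1) := by gcongr; linarith
      _ = ε / 3 := by simp only [δ]; field_simp
  -- a finite `δ`-net of the cube `[-1, 1]ᵏ⁺¹`, its points extended by zero to sequences
  let ext (v : Fin (k + 1) → ℝ) (i : ℕ) : ℝ := if h : i < k + 1 then v ⟨i, h⟩ else 0
  obtain ⟨T, -, hT, hcover⟩ :=
    finite_cover_balls_of_compact (isCompact_closedBall (0 : Fin (k + 1) → ℝ) 1)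
      (by positivity : 0 < δ)
  choose N hN using fun v => hx.exists_abs_sub_lt k (ext v) (by positivity : 0 < ε / 3)
  refine ⟨hT.toFinset.sup N, fun l l' hl hl' h0 h0' a ha => ?_⟩
  have hav : (fun i : Fin (k + 1) => a i) ∈ closedBall 0 1 := by
    rw [mem_closedBall_zero_iff, pi_norm_le_iff_of_nonneg zero_le_one]
    exact fun i => by rw [Real.norm_eq_abs]; exact ha i (Nat.lt_succ_iff.mp i.2)
  obtain ⟨v, hvT, hv⟩ := Set.mem_iUnion₂.mp (hcover hav)
  have hclose : ∀ i ≤ k, |a i - ext v i| ≤ δ := fun i hi => by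
    have := (dist_le_pi_dist _ v ⟨i, by omega⟩).trans (mem_ball.mp hv).le
    simpa [ext, hi, Real.dist_eq] using this
  have hNv : N v ≤ hT.toFinset.sup N := Finset.le_sup (hT.mem_toFinset.mpr hvT)
  have e₁ := (abs_norm_sub_norm_le _ _).trans ((norm_spreadSum_sub_le hC hclose l).trans hδC)
  have e₂ := (abs_norm_sub_norm_le _ _).trans ((norm_spreadSum_sub_le hC hclose l').trans hδC)
  have e₃ := hN v l l' hl hl' (by omega) (by omega)
  rw [abs_sub_comm] at e₂
  calc |‖spreadSum x k a l‖ - ‖spreadSum x k a l'‖|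
      ≤ |‖spreadSum x k a l‖ - ‖spreadSum x k (ext v) l‖| +
          (|‖spreadSum x k (ext v) l‖ - ‖spreadSum x k (ext v) l'‖| +
            |‖spreadSum x k (ext v) l'‖ - ‖spreadSum x k a l'‖|) :=
        (abs_sub_le _ _ _).trans (add_le_add le_rfl (abs_sub_le _ _ _))
    _ ≤ ε / 3 + (ε / 3 + ε / 3) := add_le_add e₁ (add_le_add e₃.le e₂)
    _ = ε := by ring

end SpreadSums

section BasisConstant

variable {X : Type*} [NormedAddCommGroup X] [NormedSpace ℝ X] {K : ℝ} {e x : ℕ → X}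

def HasBasisConstant (K : ℝ) (x : ℕ → X) : Prop :=
  ∀ (a : ℕ → ℝ) (m n : ℕ), m ≤ n → ‖∑ i ∈ range m, a i • x i‖ ≤ K * ‖∑ i ∈ range n, a i • x i‖

theorem HasBasisConstant.mono (h : HasBasisConstant K x) {K' : ℝ} (hK : K ≤ K') :
    HasBasisConstant K' x :=
  fun a m n hmn => (h a m n hmn).trans (mul_le_mul_of_nonneg_right hK (norm_nonneg _))

theorem HasBasisConstant.norm_smul_le (h : HasBasisConstant K x) (a : ℕ → ℝ) {j k : ℕ}
    (hjk : j ≤ k) : ‖a j • x j‖ ≤ 2 * K * ‖∑ i ∈ range (k + 1), a i • x i‖ := by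
  have h₁ := h a j (k + 1) (by omega)
  have h₂ := h a (j + 1) (k + 1) (by omega)
  calc ‖a j • x j‖ = ‖∑ i ∈ range (j + 1), a i • x i - ∑ i ∈ range j, a i • x i‖ := by
        rw [sum_range_succ, add_sub_cancel_left]
    _ ≤ ‖∑ i ∈ range (j + 1), a i • x i‖ + ‖∑ i ∈ range j, a i • x i‖ := norm_sub_le _ _
    _ ≤ 2 * K * ‖∑ i ∈ range (k + 1), a i • x i‖ := by linarith

theorem strictMono_of_lt_of_le_succ {A B : ℕ → ℕ} (hAB : ∀ n, A n < B n)
    (hBA : ∀ n, B n ≤ A (n + 1)) : StrictMono A :=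
  strictMono_nat_of_lt_succ fun n => (hAB n).trans_le (hBA n)

theorem _root_.IsBlockSeq.comp (hx : IsBlockSeq e x) {l : ℕ → ℕ} (hl : StrictMono l) :
    IsBlockSeq e (x ∘ l) := by
  obtain ⟨A, B, c, hAB, hBA, hx⟩ := hx
  refine ⟨A ∘ l, B ∘ l, c, fun n => hAB _, fun n => ?_, fun n => hx _⟩
  exact (hBA _).trans ((strictMono_of_lt_of_le_succ hAB hBA).monotone (hl (Nat.lt_succ_self n)))

theorem isBlockSeq_comp_self {l : ℕ → ℕ} (hl : StrictMono l) : IsBlockSeq x (x ∘ l) :=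
  ⟨l, fun n => l n + 1, fun _ => 1, fun n => Nat.lt_succ_self _, fun n => hl (Nat.lt_succ_self n),
    fun n => by simp⟩

theorem HasBasisConstant.of_isBlockSeq (he : HasBasisConstant K e) (hx : IsBlockSeq e x) :
    HasBasisConstant K x := by
  classical
  obtain ⟨A, B, c, hAB, hBA, hx⟩ := hx
  have hA := strictMono_of_lt_of_le_succ hAB hBA
  intro a m n hmn
  let d (p : ℕ) : ℝ := ∑ i ∈ range n, if p ∈ Ico (A i) (B i) then a i * c p else 0
  have hblock (m' i : ℕ) :
      ∑ p ∈ range (A m'), (if p ∈ Ico (A i) (B i) then a i * c p else 0) • e p =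
        if i < m' then a i • x i else 0 := by
    simp only [ite_smul, zero_smul]
    split_ifs with hi
    · have hsub : Ico (A i) (B i) ⊆ range (A m') := fun p hp =>
        mem_range.mpr ((mem_Ico.mp hp).2.trans_le ((hBA i).trans (hA.monotone hi)))
      rw [sum_ite_mem, inter_eq_right.mpr hsub, hx i, Finset.smul_sum]
      simp only [mul_smul]
    · refine Finset.sum_eq_zero fun p hp => if_neg fun hpi => ?_
      have := hA.monotone (not_lt.mp hi)
      have := (mem_Ico.mp hpi).1
      have := mem_range.mp hp
      omega
  have key : ∀ m' ≤ n, ∑ p ∈ range (A m'), d p • e p = ∑ i ∈ range m', a i • x i := by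
    intro m' hm'
    simp only [d, Finset.sum_smul]
    rw [Finset.sum_comm, Finset.sum_congr rfl fun i _ => hblock m' i, ← Finset.sum_filter]
    congr 1
    ext i
    simp only [mem_filter, mem_range]
    omega
  rw [← key m hmn, ← key n le_rfl]
  exact he d (A m) (A n) (hA.monotone hmn)

end BasisConstant

section LowerSupEstimate

variable {X : Type*} [NormedAddCommGroup X] [NormedSpace ℝ X] {x : ℕ → X}

def LowerSupEstimate (c : ℝ) (x : ℕ → X) : Prop :=
  ∀ k (l : ℕ → ℕ), StrictMono l → ∀ (a : ℕ → ℝ), ∀ j ≤ k, c * |a j| ≤ ‖spreadSum x k a l‖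

theorem lowerSupEstimate_of_hasBasisConstant_comp {c K : ℝ} (hK : 0 < K)
    (hc : ∀ i, c ≤ ‖x i‖) (h : ∀ l : ℕ → ℕ, StrictMono l → HasBasisConstant K (x ∘ l)) :
    LowerSupEstimate (c / (2 * K)) x := by
  intro k l hl a j hj
  have hj' := (h l hl).norm_smul_le a hj
  rw [norm_smul, Real.norm_eq_abs] at hj'
  rw [div_mul_eq_mul_div, div_le_iff₀ (by positivity), mul_comm _ (2 * K)]
  calc c * |a j| ≤ |a j| * ‖x (l j)‖ := by
        rw [mul_comm]; exact mul_le_mul_of_nonneg_left (hc _) (abs_nonneg _)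
    _ ≤ 2 * K * ‖spreadSum x k a l‖ := hj'

end LowerSupEstimate

section Relation

variable {X : Type*} [NormedAddCommGroup X] [NormedSpace ℝ X]

/-- A sequence together with a candidate spreading modulus: the common part of the codes of the
sequences of each class. -/
abbrev SeqCode (X : Type*) := (ℕ → X) × (ℕ → ℕ → ℕ)

/-- On tame codes, equivalence of spreading models is the union of these closed relations. -/
def spreadingModelRel (n : ℕ) : Set (SeqCode X × SeqCode X) :=
  {p | ∀ k (l : ℕ → ℕ), StrictMono l → max (p.1.2 k n) (p.2.2 k n) < l 0 → ∀ a : ℕ → ℝ,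
    ‖spreadSum p.2.1 k a l‖ ≤ (n + 1) * ‖spreadSum p.1.1 k a l‖ ∧
      ‖spreadSum p.1.1 k a l‖ ≤ (n + 1) * ‖spreadSum p.2.1 k a l‖}

theorem isClosed_spreadingModelRel (n : ℕ) : IsClosed (spreadingModelRel (X := X) n) := by
  simp only [spreadingModelRel, Set.ofPred_forall]
  refine isClosed_iInter fun k => isClosed_iInter fun l => isClosed_iInter fun _ =>
    isClosed_imp ((isOpen_discrete {v : ℕ | v < l 0}).preimage (by fun_prop)) ?_
  simp only [Set.ofPred_forall]
  refine isClosed_iInter fun a => ?_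
  have h₁ : Continuous fun p : SeqCode X × SeqCode X => ‖spreadSum p.1.1 k a l‖ :=
    ((continuous_spreadSum k a l).comp (continuous_fst.comp continuous_fst)).norm
  have h₂ : Continuous fun p : SeqCode X × SeqCode X => ‖spreadSum p.2.1 k a l‖ :=
    ((continuous_spreadSum k a l).comp (continuous_fst.comp continuous_snd)).norm
  exact (isClosed_le h₂ (continuous_const.mul h₁)).inter (isClosed_le h₁ (continuous_const.mul h₂))

theorem spreadingModelsEquiv_of_mem_spreadingModelRel {w w' : SeqCode X} {n : ℕ}
    (h : (w, w') ∈ spreadingModelRel n) :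
    SpreadingModelsEquiv w.1 w'.1 :=
  ⟨n + 1, le_add_of_nonneg_left n.cast_nonneg, fun k => ⟨_, fun l hl hl0 a => h k l hl hl0 a⟩⟩

/-- The moduli transfer the domination from far-out tuples to all tuples beyond them, at an
additive cost `2⁻ⁿ maxᵢ |aᵢ|` that the lower estimate of `x` absorbs. -/
theorem norm_spreadSum_le_of_eventually_le {x y : ℕ → X} {μ ν : ℕ → ℕ → ℕ}
    (hμ : IsSpreadingModulus x μ) (hν : IsSpreadingModulus y ν) {c C : ℝ}
    (hc : LowerSupEstimate c x) (hC : 0 ≤ C) {k N n : ℕ}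
    (hdom : ∀ l : ℕ → ℕ, StrictMono l → N < l 0 → ∀ a,
      ‖spreadSum y k a l‖ ≤ C * ‖spreadSum x k a l‖)
    (hn : (C + 1) * (1 / 2) ^ n ≤ c) {l : ℕ → ℕ} (hl : StrictMono l)
    (hl0 : max (μ k n) (ν k n) < l 0) (a : ℕ → ℝ) :
    ‖spreadSum y k a l‖ ≤ (C + 1) * ‖spreadSum x k a l‖ := by
  obtain ⟨j, hj, hjmax⟩ := (range (k + 1)).exists_max_image (fun i => |a i|) nonempty_range_add_one
  have ha : ∀ i ≤ k, |a i| ≤ |a j| := fun i hi => hjmax i (mem_range.mpr (Nat.lt_succ_of_le hi))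
  set L := max N (max (μ k n) (ν k n))
  have hfar : StrictMono fun i => L + 1 + i := add_right_strictMono
  have ey := abs_le.mp (hν.abs_sub_le hl hfar (lt_of_le_of_lt (le_max_right _ _) hl0)
    (by simp only [L]; omega) ha)
  have ex := abs_le.mp (hμ.abs_sub_le hl hfar (lt_of_le_of_lt (le_max_left _ _) hl0)
    (by simp only [L]; omega) ha)
  have hfar_dom := hdom _ hfar (by simp only [L]; omega) a
  have hlow := hc k l hl a j (Nat.lt_succ_iff.mp (mem_range.mp hj))
  have hε : (C + 1) * ((1 / 2) ^ n * |a j|) ≤ c * |a j| := by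
    rw [← mul_assoc]; exact mul_le_mul_of_nonneg_right hn (abs_nonneg _)
  have hCx := mul_le_mul_of_nonneg_left (by linarith [ex.1] :
    ‖spreadSum x k a fun i => L + 1 + i‖ ≤ ‖spreadSum x k a l‖ + (1 / 2) ^ n * |a j|) hC
  nlinarith [ey.2]

def IsTameCode (w : SeqCode X) : Prop :=
  (∃ c > 0, LowerSupEstimate c w.1) ∧ IsSpreadingModulus w.1 w.2

theorem exists_mem_spreadingModelRel {w w' : SeqCode X} (hw : IsTameCode w) (hw' : IsTameCode w')
    (h : SpreadingModelsEquiv w.1 w'.1) : ∃ n, (w, w') ∈ spreadingModelRel n := by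
  obtain ⟨⟨c, hc, hcw⟩, hμ⟩ := hw
  obtain ⟨⟨c', hc', hcw'⟩, hμ'⟩ := hw'
  obtain ⟨C, hC, hCk⟩ := h
  obtain ⟨n₀, hn₀⟩ := exists_pow_lt_of_lt_one
    (div_pos (lt_min hc hc') (by linarith : (0 : ℝ) < C + 1)) (by norm_num : (1 / 2 : ℝ) < 1)
  set n := max n₀ ⌈C⌉₊
  have hCn : C ≤ n := (Nat.le_ceil C).trans (by exact_mod_cast le_max_right _ _)
  have hpow : (C + 1) * (1 / 2) ^ n ≤ min c c' := by
    have : (1 / 2 : ℝ) ^ n ≤ (1 / 2) ^ n₀ :=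
      pow_le_pow_of_le_one (by norm_num) (by norm_num) (le_max_left _ _)
    rw [lt_div_iff₀ (by linarith)] at hn₀
    nlinarith
  have hmul (s : ℝ) (hs : 0 ≤ s) : (C + 1) * s ≤ (n + 1) * s :=
    mul_le_mul_of_nonneg_right (by linarith) hs
  refine ⟨n, fun k l hl hl0 a => ?_⟩
  obtain ⟨N, hN⟩ := hCk k
  constructor
  · exact (norm_spreadSum_le_of_eventually_le hμ hμ' hcw (by linarith)
      (fun l hl h0 a => (hN l hl h0 a).1) (hpow.trans (min_le_left _ _)) hl hl0 a).trans
      (hmul _ (norm_nonneg _))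
  · exact (norm_spreadSum_le_of_eventually_le hμ' hμ hcw' (by linarith)
      (fun l hl h0 a => (hN l hl h0 a).2) (hpow.trans (min_le_right _ _)) hl
      (by rwa [max_comm]) a).trans (hmul _ (norm_nonneg _))

end Relation

section Dichotomy

variable {X : Type*} [NormedAddCommGroup X] [NormedSpace ℝ X]

theorem nonempty_embedding_real_nat_bool : Nonempty (ℝ ↪ (ℕ → Bool)) := by
  rw [← Cardinal.le_def, Cardinal.mk_real, Cardinal.mk_arrow]
  simp [Cardinal.two_power_aleph0]

def SpreadingModelDichotomy (Q : (ℕ → X) → Prop) : Prop :=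
  (∃ F : ℝ → ℕ → X, (∀ t, Q (F t)) ∧ ∀ s t, s ≠ t → ¬ SpreadingModelsEquiv (F s) (F t)) ∨
    ∃ D : ℕ → ℕ → X, ∀ x, Q x → ∃ n, Q (D n) ∧ SpreadingModelsEquiv x (D n)

theorem spreadingModelDichotomy_of_isClosed [CompleteSpace X] [SeparableSpace X] {E : Type*}
    [TopologicalSpace E] [PolishSpace E] {Q : (ℕ → X) → Prop} {W : Set (SeqCode X × E)}
    (hW : IsClosed W) (hsound : ∀ w ∈ W, Q w.1.1 ∧ IsTameCode w.1)
    (hcomplete : ∀ x, Q x → ∃ w ∈ W, w.1.1 = x) : SpreadingModelDichotomy Q := by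
  have := hW.polishSpace
  let F (n : ℕ) : Set (W × W) := {p | (p.1.1.1, p.2.1.1) ∈ spreadingModelRel n}
  have hF (n : ℕ) : IsClosed (F n) := (isClosed_spreadingModelRel n).preimage (by fun_prop)
  have hrel {w w' : W} : (w, w') ∈ ⋃ n, F n ↔ SpreadingModelsEquiv w.1.1.1 w'.1.1.1 :=
    ⟨fun h => (Set.mem_iUnion.mp h).elim fun _ => spreadingModelsEquiv_of_mem_spreadingModelRel,
      fun h => Set.mem_iUnion.mpr
        (exists_mem_spreadingModelRel (hsound _ w.2).2 (hsound _ w'.2).2 h)⟩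
  rcases exists_cantor_family_or_sectionCovered hF with ⟨G, hG⟩ | ⟨D, hD, hcov⟩
  · obtain ⟨emb⟩ := nonempty_embedding_real_nat_bool
    exact Or.inl ⟨fun t => (G (emb t)).1.1.1, fun t => (hsound _ (G (emb t)).2).1,
      fun s t hst h => hG (emb.injective.ne hst) (hrel.mpr h)⟩
  right
  rcases isEmpty_or_nonempty W with hWe | hWne
  · refine ⟨0, fun x hx => ?_⟩
    obtain ⟨w, hw, -⟩ := hcomplete x hx
    exact (hWe.false ⟨w, hw⟩).elim
  obtain ⟨f, hf⟩ := Set.countable_iff_exists_subset_range.mp hD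
  refine ⟨fun n => (f n).1.1.1, fun x hx => ?_⟩
  obtain ⟨w, hw, rfl⟩ := hcomplete x hx
  obtain ⟨d, hd, hwd⟩ := hcov ⟨w, hw⟩ trivial
  obtain ⟨n, rfl⟩ := hf hd
  exact ⟨n, (hsound _ (f n).2).1, hrel.mp hwd⟩

end Dichotomy

section Codes

theorem isClosed_setOf_mem_of_continuous {α β : Type*} [TopologicalSpace α] [TopologicalSpace β]
    [DiscreteTopology β] {f : α → β} (hf : Continuous f) {C : β → Set α}
    (hC : ∀ b, IsClosed (C b)) : IsClosed {a | a ∈ C (f a)} := by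
  have : {a | a ∈ C (f a)}ᶜ = ⋃ b, f ⁻¹' {b} ∩ (C b)ᶜ := by
    ext a
    simp
  rw [← isOpen_compl_iff, this]
  exact isOpen_iUnion fun b => ((isOpen_discrete {b}).preimage hf).inter (hC b).isOpen_compl

variable {X : Type*} [NormedAddCommGroup X] {x : ℕ → X}

def NormsWithin (q : ℕ) (x : ℕ → X) : Prop :=
  ∀ i, (q : ℝ)⁻¹ ≤ ‖x i‖ ∧ ‖x i‖ ≤ q

theorem isClosed_setOf_normsWithin (q : ℕ) : IsClosed {x : ℕ → X | NormsWithin q x} := by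
  simp only [NormsWithin, Set.ofPred_forall]
  exact isClosed_iInter fun i => (isClosed_le continuous_const (continuous_apply i).norm).inter
    (isClosed_le (continuous_apply i).norm continuous_const)

theorem NormsWithin.seminormalized {q : ℕ} (hq : 0 < q) (h : NormsWithin q x) :
    Seminormalized x := by
  have hq' : (0 : ℝ) < (q : ℝ)⁻¹ := by positivity
  refine ⟨(q : ℝ)⁻¹ / 2, q + 1, by positivity, ?_, fun i => ⟨?_, ?_⟩⟩
  · linarith [(h 0).1, (h 0).2]
  · linarith [(h i).1]
  · linarith [(h i).2]

theorem _root_.Seminormalized.exists_normsWithin (hx : Seminormalized x) (K : ℝ) :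
    ∃ q : ℕ, 0 < q ∧ K ≤ q ∧ NormsWithin q x := by
  obtain ⟨c, C, hc, -, hcC⟩ := hx
  set M := max (max c⁻¹ C) K
  have hM : M ≤ (⌈M⌉₊ + 1 : ℕ) := by push_cast; linarith [Nat.le_ceil M]
  have h₁ : c⁻¹ ≤ M := (le_max_left _ _).trans (le_max_left _ _)
  have h₂ : C ≤ M := (le_max_right _ _).trans (le_max_left _ _)
  refine ⟨⌈M⌉₊ + 1, Nat.succ_pos _, (le_max_right _ _).trans hM, fun i => ⟨?_, ?_⟩⟩
  · exact (inv_le_of_inv_le₀ hc (h₁.trans hM)).trans (hcC i).1.le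
  · linarith [(hcC i).2]

variable [NormedSpace ℝ X]

theorem isClosed_setOf_hasBasisConstant (K : ℝ) :
    IsClosed {x : ℕ → X | HasBasisConstant K x} := by
  simp only [HasBasisConstant, Set.ofPred_forall]
  exact isClosed_iInter fun a => isClosed_iInter fun m => isClosed_iInter fun n =>
    isClosed_iInter fun _ => isClosed_le (by fun_prop) (by fun_prop)

theorem isClosed_setOf_isSpreadingModulus :
    IsClosed {w : SeqCode X | IsSpreadingModulus w.1 w.2} := by
  simp only [IsSpreadingModulus, Set.ofPred_forall]
  refine isClosed_iInter fun k => isClosed_iInter fun m => isClosed_iInter fun l =>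
    isClosed_iInter fun l' => isClosed_iInter fun _ => isClosed_iInter fun _ =>
      isClosed_imp ?_ (isClosed_imp ?_ ?_)
  · exact (isOpen_discrete {v : ℕ | v < l 0}).preimage (by fun_prop)
  · exact (isOpen_discrete {v : ℕ | v < l' 0}).preimage (by fun_prop)
  simp only [Set.ofPred_forall]
  refine isClosed_iInter fun a => isClosed_iInter fun _ => isClosed_le ?_ continuous_const
  exact (((continuous_spreadSum k a l).comp continuous_fst).norm.sub
    ((continuous_spreadSum k a l').comp continuous_fst).norm).abs

end Codes

section WeaklyNull

variable {X : Type*} [NormedAddCommGroup X] [NormedSpace ℝ X] {x : ℕ → X}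

theorem tendsto_zero_of_forall_abs_le {u : ℕ → ℝ} {N : ℕ → ℕ}
    (h : ∀ m i, N m < i → |u i| ≤ (1 / 2) ^ m) : Tendsto u atTop (𝓝 0) := by
  refine Metric.tendsto_atTop.mpr fun ε hε => ?_
  obtain ⟨m, hm⟩ := exists_pow_lt_of_lt_one hε (by norm_num : (1 / 2 : ℝ) < 1)
  exact ⟨N m + 1, fun i hi => by
    rw [Real.dist_eq, sub_zero]; exact (h m i (by omega)).trans_lt hm⟩

/-- The evaluations at the `x i` are equicontinuous on the dual, so their convergence to `0`
propagates from a dense set of functionals to all of them. -/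
theorem weaklyNull_of_denseRange {C : ℝ} (hC : ∀ i, ‖x i‖ ≤ C) {φ : ℕ → StrongDual ℝ X}
    (hφ : DenseRange φ) (h : ∀ j, Tendsto (fun i => φ j (x i)) atTop (𝓝 0)) : WeaklyNull x := by
  let g (i : ℕ) : StrongDual ℝ X →L[ℝ] ℝ := ContinuousLinearMap.apply ℝ ℝ (x i)
  have hbound : ∃ C, ∀ i ψ, ‖g i ψ‖ ≤ C * ‖ψ‖ :=
    ⟨C, fun i ψ => by simpa [g, mul_comm C] using ψ.le_opNorm_of_le (hC i)⟩
  have hg := ((NormedSpace.equicontinuous_TFAE g).out 3 1).mp hbound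
  have hclosed := hg.isClosed_setOfPred_tendsto (l := atTop) (f := fun _ => 0) continuous_const
  intro ψ
  refine hclosed.closure_subset_iff.mpr (Set.range_subset_iff.mpr h) ?_
  rw [hφ.closure_range]
  trivial

variable (φ : ℕ → StrongDual ℝ X)

abbrev WeaklyNullCode (X : Type*) [NormedAddCommGroup X] := SeqCode X × (ℕ × (ℕ → ℕ → ℕ))

/-- Codes of weakly null seminormalized basic sequences: besides the modulus, a bound `q` for
the norms, their inverses and the basis constant, and thresholds `ν j m` beyond which
`|φ j (x i)| ≤ 2⁻ᵐ`. -/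
def weaklyNullCodes : Set (WeaklyNullCode X) :=
  {w | 0 < w.2.1 ∧ NormsWithin w.2.1 w.1.1 ∧ HasBasisConstant w.2.1 w.1.1 ∧
    (∀ j m i, w.2.2 j m < i → |φ j (w.1.1 i)| ≤ (1 / 2) ^ m) ∧ IsSpreadingModulus w.1.1 w.1.2}

theorem isClosed_weaklyNullCodes : IsClosed (weaklyNullCodes φ) := by
  have hq : Continuous fun w : WeaklyNullCode X => w.2.1 := by fun_prop
  have hν : IsClosed {w : WeaklyNullCode X | ∀ j m i, w.2.2 j m < i →
      |φ j (w.1.1 i)| ≤ (1 / 2) ^ m} := by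
    simp only [Set.ofPred_forall]
    exact isClosed_iInter fun j => isClosed_iInter fun m => isClosed_iInter fun i =>
      isClosed_imp ((isOpen_discrete {v : ℕ | v < i}).preimage (by fun_prop))
        (isClosed_le (by fun_prop) continuous_const)
  refine ((isClosed_discrete {q | 0 < q}).preimage hq).inter <|
    (isClosed_setOf_mem_of_continuous hq (C := fun q => {w | NormsWithin q w.1.1}) fun q =>
      (isClosed_setOf_normsWithin q).preimage (by fun_prop)).inter <|
    (isClosed_setOf_mem_of_continuous hq (C := fun q => {w | HasBasisConstant q w.1.1}) fun q =>
      (isClosed_setOf_hasBasisConstant q).preimage (by fun_prop)).inter <|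
    hν.inter (isClosed_setOf_isSpreadingModulus.preimage continuous_fst)

theorem weaklyNullCodes_sound (hφ : DenseRange φ) {w : WeaklyNullCode X}
    (hw : w ∈ weaklyNullCodes φ) :
    (Seminormalized w.1.1 ∧ IsBasicSeq w.1.1 ∧ WeaklyNull w.1.1 ∧
      GeneratesASpreadingModel w.1.1) ∧ IsTameCode w.1 := by
  obtain ⟨hq, hnorm, hbasis, hν, hμ⟩ := hw
  have hq₁ : (1 : ℝ) ≤ w.2.1 := by exact_mod_cast hq
  have hne (i : ℕ) : w.1.1 i ≠ 0 := fun h0 => by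
    have := (hnorm i).1
    rw [h0, norm_zero] at this
    exact (inv_pos.mpr (by positivity : (0 : ℝ) < w.2.1)).not_ge this
  refine ⟨⟨hnorm.seminormalized hq, ⟨hne, w.2.1, hq₁, hbasis⟩,
    weaklyNull_of_denseRange (fun i => (hnorm i).2) hφ fun j =>
      tendsto_zero_of_forall_abs_le (hν j),
    hμ.generatesASpreadingModel⟩, ⟨(w.2.1 : ℝ)⁻¹ / (2 * w.2.1), by positivity, ?_⟩, hμ⟩
  exact lowerSupEstimate_of_hasBasisConstant_comp (by positivity) (fun i => (hnorm i).1)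
    fun l hl => hbasis.of_isBlockSeq (isBlockSeq_comp_self hl)

theorem exists_mem_weaklyNullCodes (hs : Seminormalized x) (hb : IsBasicSeq x) (hw : WeaklyNull x)
    (hg : GeneratesASpreadingModel x) : ∃ w ∈ weaklyNullCodes φ, w.1.1 = x := by
  obtain ⟨-, K, -, hK⟩ := hb
  obtain ⟨q, hq, hKq, hnorm⟩ := hs.exists_normsWithin K
  obtain ⟨μ, hμ⟩ := hg.exists_isSpreadingModulus fun i => (hnorm i).2
  have hν (j m : ℕ) : ∃ N, ∀ i, N < i → |φ j (x i)| ≤ (1 / 2) ^ m := by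
    obtain ⟨N, hN⟩ := Metric.tendsto_atTop.mp (hw (φ j)) _ (by positivity : (0 : ℝ) < (1 / 2) ^ m)
    exact ⟨N, fun i hi => by simpa [Real.dist_eq] using (hN i hi.le).le⟩
  choose ν hν using hν
  exact ⟨((x, μ), q, ν), ⟨hq, hnorm, HasBasisConstant.mono hK hKq, hν, hμ⟩, rfl⟩

theorem spreadingModelDichotomy_weaklyNull [CompleteSpace X] [SeparableSpace X]
    (hX : SeparableSpace (StrongDual ℝ X)) :
    SpreadingModelDichotomy fun x : ℕ → X =>
      Seminormalized x ∧ IsBasicSeq x ∧ WeaklyNull x ∧ GeneratesASpreadingModel x := by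
  obtain ⟨φ, hφ⟩ := exists_dense_seq (StrongDual ℝ X)
  exact spreadingModelDichotomy_of_isClosed (isClosed_weaklyNullCodes φ)
    (fun w hw => weaklyNullCodes_sound φ hφ hw) fun x ⟨hs, hb, hw, hg⟩ =>
      exists_mem_weaklyNullCodes φ hs hb hw hg

end WeaklyNull

section Blocks

variable {X : Type*} [NormedAddCommGroup X] [NormedSpace ℝ X] (e : ℕ → X) {x : ℕ → X}

abbrev BlockCode (X : Type*) [NormedAddCommGroup X] := SeqCode X × (ℕ × (ℕ → ℝ) × (ℕ → ℕ × ℕ))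

/-- Codes of seminormalized block sequences of `e`: besides the modulus, a bound `q` for the norms
and their inverses, the coefficients `c` and the windows `I n = [A n, B n)` of the blocks. -/
def blockCodes : Set (BlockCode X) :=
  {w | 0 < w.2.1 ∧ NormsWithin w.2.1 w.1.1 ∧ (∀ n, (w.2.2.2 n).1 < (w.2.2.2 n).2) ∧
    (∀ n, (w.2.2.2 n).2 ≤ (w.2.2.2 (n + 1)).1) ∧
    (∀ n, w.1.1 n = ∑ i ∈ Ico (w.2.2.2 n).1 (w.2.2.2 n).2, w.2.2.1 i • e i) ∧
    IsSpreadingModulus w.1.1 w.1.2}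

theorem isClosed_blockCodes : IsClosed (blockCodes e) := by
  have hq : Continuous fun w : BlockCode X => w.2.1 := by fun_prop
  have hI (n : ℕ) : Continuous fun w : BlockCode X => w.2.2.2 n := by fun_prop
  have hlt : IsClosed {w : BlockCode X | ∀ n, (w.2.2.2 n).1 < (w.2.2.2 n).2} := by
    simp only [Set.ofPred_forall]
    exact isClosed_iInter fun n => (isClosed_discrete {I : ℕ × ℕ | I.1 < I.2}).preimage (hI n)
  have hle : IsClosed {w : BlockCode X | ∀ n, (w.2.2.2 n).2 ≤ (w.2.2.2 (n + 1)).1} := by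
    simp only [Set.ofPred_forall]
    exact isClosed_iInter fun n =>
      (isClosed_discrete {I : (ℕ × ℕ) × (ℕ × ℕ) | I.1.2 ≤ I.2.1}).preimage ((hI n).prodMk (hI _))
  have hrep : IsClosed {w : BlockCode X |
      ∀ n, w.1.1 n = ∑ i ∈ Ico (w.2.2.2 n).1 (w.2.2.2 n).2, w.2.2.1 i • e i} := by
    simp only [Set.ofPred_forall]
    exact isClosed_iInter fun n => isClosed_setOf_mem_of_continuous (hI n)
      (C := fun I => {w | w.1.1 n = ∑ i ∈ Ico I.1 I.2, w.2.2.1 i • e i}) fun I =>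
        isClosed_eq (by fun_prop) (by fun_prop)
  exact ((isClosed_discrete {q | 0 < q}).preimage hq).inter <|
    (isClosed_setOf_mem_of_continuous hq (C := fun q => {w | NormsWithin q w.1.1}) fun q =>
      (isClosed_setOf_normsWithin q).preimage (by fun_prop)).inter <|
    hlt.inter <| hle.inter <| hrep.inter (isClosed_setOf_isSpreadingModulus.preimage continuous_fst)

theorem blockCodes_sound {K : ℝ} (hK : 0 < K) (he : HasBasisConstant K e)
    {w : BlockCode X} (hw : w ∈ blockCodes e) :
    (IsBlockSeq e w.1.1 ∧ Seminormalized w.1.1 ∧ GeneratesASpreadingModel w.1.1) ∧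
      IsTameCode w.1 := by
  obtain ⟨hq, hnorm, hAB, hBA, hrep, hμ⟩ := hw
  have hblock : IsBlockSeq e w.1.1 :=
    ⟨fun n => (w.2.2.2 n).1, fun n => (w.2.2.2 n).2, w.2.2.1, hAB, hBA, hrep⟩
  refine ⟨⟨hblock, hnorm.seminormalized hq, hμ.generatesASpreadingModel⟩,
    ⟨(w.2.1 : ℝ)⁻¹ / (2 * K), by positivity, ?_⟩, hμ⟩
  exact lowerSupEstimate_of_hasBasisConstant_comp hK (fun i => (hnorm i).1)
    fun l hl => he.of_isBlockSeq (hblock.comp hl)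

theorem exists_mem_blockCodes (hb : IsBlockSeq e x) (hs : Seminormalized x)
    (hg : GeneratesASpreadingModel x) : ∃ w ∈ blockCodes e, w.1.1 = x := by
  obtain ⟨A, B, c, hAB, hBA, hrep⟩ := hb
  obtain ⟨q, hq, -, hnorm⟩ := hs.exists_normsWithin 0
  obtain ⟨μ, hμ⟩ := hg.exists_isSpreadingModulus fun i => (hnorm i).2
  exact ⟨((x, μ), q, c, fun n => (A n, B n)), ⟨hq, hnorm, hAB, hBA, hrep, hμ⟩, rfl⟩

theorem spreadingModelDichotomy_block [CompleteSpace X] [SeparableSpace X] {e : ℕ → X}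
    (he : IsBasicSeq e) :
    SpreadingModelDichotomy fun x =>
      IsBlockSeq e x ∧ Seminormalized x ∧ GeneratesASpreadingModel x := by
  obtain ⟨-, K, hK, hKe⟩ := he
  exact spreadingModelDichotomy_of_isClosed (isClosed_blockCodes e)
    (fun w hw => blockCodes_sound e (by linarith) hKe hw) fun x ⟨hb, hs, hg⟩ =>
      exists_mem_blockCodes e hb hs hg

end Blocks

end SpreadingModel

/-- Let `X` be a separable Banach space. If `X*` is separable, the
Silver dichotomy holds for spreading models generated by weakly null seminormalized
basic sequences; if `X` has a Schauder basis, it holds for spreading models generated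
by (seminormalized) block basic sequences of the basis. -/
theorem statement13 {X : Type*} [NormedAddCommGroup X] [NormedSpace ℝ X] [CompleteSpace X]
    [TopologicalSpace.SeparableSpace X] :
    (TopologicalSpace.SeparableSpace (StrongDual ℝ X) →
      ((∃ F : ℝ → (ℕ → X),
        (∀ t, Seminormalized (F t) ∧ IsBasicSeq (F t) ∧ WeaklyNull (F t) ∧
          GeneratesASpreadingModel (F t)) ∧
        ∀ s t : ℝ, s ≠ t → ¬ SpreadingModelsEquiv (F s) (F t)) ∨
      (∃ D : ℕ → (ℕ → X),
        ∀ x : ℕ → X, Seminormalized x → IsBasicSeq x → WeaklyNull x →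
          GeneratesASpreadingModel x →
          ∃ n : ℕ, Seminormalized (D n) ∧ IsBasicSeq (D n) ∧ WeaklyNull (D n) ∧
            GeneratesASpreadingModel (D n) ∧ SpreadingModelsEquiv x (D n)))) ∧
    (∀ e : ℕ → X, IsBasicSeq e →
      Dense (Submodule.span ℝ (Set.range e) : Set X) →
      ((∃ F : ℝ → (ℕ → X),
        (∀ t, IsBlockSeq e (F t) ∧ Seminormalized (F t) ∧
          GeneratesASpreadingModel (F t)) ∧
        ∀ s t : ℝ, s ≠ t → ¬ SpreadingModelsEquiv (F s) (F t)) ∨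
      (∃ D : ℕ → (ℕ → X),
        ∀ x : ℕ → X, IsBlockSeq e x → Seminormalized x → GeneratesASpreadingModel x →
          ∃ n : ℕ, IsBlockSeq e (D n) ∧ Seminormalized (D n) ∧
            GeneratesASpreadingModel (D n) ∧ SpreadingModelsEquiv x (D n)))) := by
  refine ⟨fun hX => ?_, fun e he _ => ?_⟩
  · simpa only [SpreadingModel.SpreadingModelDichotomy, and_imp, and_assoc] using
      SpreadingModel.spreadingModelDichotomy_weaklyNull hX
  · simpa only [SpreadingModel.SpreadingModelDichotomy, and_imp, and_assoc] using
      SpreadingModel.spreadingModelDichotomy_block he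
end
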